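/- arXiv:1809.07361 — 5 statements merged into one kernel-verified Lean document; each statement's English description precedes it below -/
import Mathlib

section
/- Let π_N be the product-form measure on Γ_N with weights μ_i^{x_i} w_i(x_i), Z_N the normalizing constant. Assume (1) there exists i* with μ_{i*} > μ_j for all j ≠ i*, and (2) for every j and α > 0 there is c_{α,j} > 0 and M_c such that for all M > M_c and r ∈ {0,…,M}, w_j(M-r) w_{i*}(r) ≤ c_{α,j} e^{αM} w_{i*}(M). Then for every δ ∈ (0,1), π_N(x_{i*} ≥ (1-δ)N) → 1 as N → ∞. -/
open Filter Finset

theorem weak_condensation (n : ℕ) (hn : 0 < n)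
    (mu : Fin n → ℝ) (hmu : ∀ i, 0 < mu i)
    (w : Fin n → ℕ → ℝ) (hw : ∀ i m, 0 < w i m) (hw0 : ∀ i, w i 0 = 1)
    (istar : Fin n)
    (hdom : ∀ j, j ≠ istar → mu j < mu istar)
    (hbound : ∀ j : Fin n, ∀ α : ℝ, 0 < α → ∃ c : ℝ, 0 < c ∧ ∃ Mc : ℕ,
      ∀ M : ℕ, Mc < M → ∀ r : ℕ, r ≤ M →
        w j (M - r) * w istar r ≤ c * Real.exp (α * M) * w istar M)
    (Z : ℕ → ℝ)
    (hZ : ∀ N, Z N = ∑ x ∈ Finset.Nat.antidiagonalTuple n N,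
        ∏ i, mu i ^ x i * w i (x i)) :
    ∀ δ : ℝ, 0 < δ → δ < 1 →
      Tendsto (fun N =>
          (∑ x ∈ Finset.Nat.antidiagonalTuple n N,
            if (1 - δ) * (N : ℝ) ≤ (x istar : ℝ) then ∏ i, mu i ^ x i * w i (x i)
            else 0) / Z N)
        atTop (nhds 1) := by
  classical
  intro δ hδ0 hδ1
  have hWpos : ∀ x : Fin n → ℕ, 0 < ∏ i, mu i ^ x i * w i (x i) := fun x =>
    Finset.prod_pos fun i _ => mul_pos (pow_pos (hmu i) _) (hw i _)
  -- lower bound on Z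
  have hZlb : ∀ N, mu istar ^ N * w istar N ≤ Z N := by
    intro N
    rw [hZ]
    have hmem : (fun i => if i = istar then N else 0) ∈ Finset.Nat.antidiagonalTuple n N := by
      rw [Finset.Nat.mem_antidiagonalTuple]
      simp
    have h1 := Finset.single_le_sum (f := fun x : Fin n → ℕ => ∏ i, mu i ^ x i * w i (x i))
      (fun x _ => (hWpos x).le) hmem
    refine le_trans (le_of_eq ?_) h1
    show mu istar ^ N * w istar N =
      ∏ i, mu i ^ (if i = istar then N else 0) * w i (if i = istar then N else 0)
    rw [Finset.prod_eq_single istar]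
    · simp
    · intro b _ hb; simp [hb, hw0]
    · simp
  have hZpos : ∀ N, 0 < Z N :=
    fun N => lt_of_lt_of_le (mul_pos (pow_pos (hmu istar) _) (hw istar _)) (hZlb N)
  -- cardinality bound for the state space
  have hcard : ∀ N, ((Finset.Nat.antidiagonalTuple n N).card : ℝ) ≤ ((N : ℝ) + 1) ^ n := by
    intro N
    have hsub : Finset.Nat.antidiagonalTuple n N ⊆
        Fintype.piFinset (fun _ : Fin n => Finset.range (N + 1)) := by
      intro x hx
      rw [Finset.Nat.mem_antidiagonalTuple] at hx
      rw [Fintype.mem_piFinset]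
      intro i
      rw [Finset.mem_range]
      have hxi : x i ≤ N := by
        calc x i ≤ ∑ j, x j := Finset.single_le_sum (fun j _ => Nat.zero_le _) (Finset.mem_univ i)
        _ = N := hx
      omega
    have h1 : (Finset.Nat.antidiagonalTuple n N).card ≤ (N + 1) ^ n := by
      calc (Finset.Nat.antidiagonalTuple n N).card
          ≤ (Fintype.piFinset (fun _ : Fin n => Finset.range (N + 1))).card :=
            Finset.card_le_card hsub
        _ = (N + 1) ^ n := by simp [Fintype.card_piFinset]
    calc ((Finset.Nat.antidiagonalTuple n N).card : ℝ) ≤ (((N + 1) ^ n : ℕ) : ℝ) := by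
          exact_mod_cast h1
      _ = ((N : ℝ) + 1) ^ n := by push_cast; ring
  -- strengthened bound (remove the threshold Mc)
  have hbound' : ∀ j : Fin n, ∀ α : ℝ, 0 < α → ∃ c : ℝ, 0 < c ∧
      ∀ M r : ℕ, r ≤ M → w j (M - r) * w istar r ≤ c * Real.exp (α * M) * w istar M := by
    intro j α hα
    obtain ⟨c, hc, Mc, hB⟩ := hbound j α hα
    set K : ℝ := ∑ M ∈ Finset.range (Mc + 1), ∑ r ∈ Finset.range (M + 1),
      (w j (M - r) * w istar r) / w istar M with hK
    have hK0 : 0 ≤ K := by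
      apply Finset.sum_nonneg
      intro M _
      apply Finset.sum_nonneg
      intro r _
      exact div_nonneg (mul_nonneg (hw _ _).le (hw _ _).le) (hw _ _).le
    refine ⟨c + K, by linarith, ?_⟩
    intro M r hr
    by_cases hM : Mc < M
    · calc w j (M - r) * w istar r ≤ c * Real.exp (α * M) * w istar M := hB M hM r hr
        _ ≤ (c + K) * Real.exp (α * M) * w istar M := by
          nlinarith [mul_nonneg (mul_nonneg hK0 (Real.exp_pos (α * M)).le) (hw istar M).le]
    · push_neg at hM
      have hmem1 : M ∈ Finset.range (Mc + 1) := Finset.mem_range.mpr (by omega)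
      have hmem2 : r ∈ Finset.range (M + 1) := Finset.mem_range.mpr (by omega)
      have hterm : (w j (M - r) * w istar r) / w istar M ≤ K := by
        calc (w j (M - r) * w istar r) / w istar M
            ≤ ∑ r' ∈ Finset.range (M + 1), (w j (M - r') * w istar r') / w istar M := by
              apply Finset.single_le_sum (f := fun r' => (w j (M - r') * w istar r') / w istar M)
                (fun r' _ => div_nonneg (mul_nonneg (hw _ _).le (hw _ _).le) (hw _ _).le) hmem2
          _ ≤ K := by
              rw [hK]
              apply Finset.single_le_sum
                (f := fun M' => ∑ r' ∈ Finset.range (M' + 1),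
                  (w j (M' - r') * w istar r') / w istar M')
                (fun M' _ => Finset.sum_nonneg fun r' _ => div_nonneg (mul_nonneg (hw _ _).le (hw _ _).le) (hw _ _).le) hmem1
      have hKw : w j (M - r) * w istar r ≤ K * w istar M := by
        rw [div_le_iff₀ (hw istar M)] at hterm
        exact hterm
      have hexp : (1 : ℝ) ≤ Real.exp (α * M) :=
        Real.one_le_exp (mul_nonneg hα.le (Nat.cast_nonneg M))
      calc w j (M - r) * w istar r ≤ K * w istar M := hKw
        _ ≤ (c + K) * Real.exp (α * M) * w istar M := by
          nlinarith [mul_nonneg (mul_nonneg hK0 (hw istar M).le) (sub_nonneg.mpr hexp),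
            mul_nonneg (mul_nonneg hc.le (Real.exp_pos (α * M)).le) (hw istar M).le]
  -- choose q
  obtain ⟨q, hq0, hq1, hqle⟩ : ∃ q : ℝ, 0 < q ∧ q < 1 ∧ ∀ j, j ≠ istar → mu j ≤ q * mu istar := by
    set F : Finset ℝ :=
      insert ((1 : ℝ) / 2) ((Finset.univ.erase istar).image fun j => mu j / mu istar) with hF
    have hFne : F.Nonempty := ⟨1 / 2, Finset.mem_insert_self _ _⟩
    refine ⟨F.max' hFne, ?_, ?_, ?_⟩
    · have h1 : (1 : ℝ) / 2 ≤ F.max' hFne := Finset.le_max' _ _ (Finset.mem_insert_self _ _)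
      linarith
    · rw [Finset.max'_lt_iff]
      intro y hy
      rcases Finset.mem_insert.mp hy with h | h
      · rw [h]; norm_num
      · obtain ⟨j, hj, rfl⟩ := Finset.mem_image.mp h
        have hjne : j ≠ istar := (Finset.mem_erase.mp hj).1
        exact (div_lt_one (hmu istar)).mpr (hdom j hjne)
    · intro j hj
      have h1 : mu j / mu istar ≤ F.max' hFne := by
        apply Finset.le_max'
        exact Finset.mem_insert.mpr (Or.inr (Finset.mem_image.mpr
          ⟨j, Finset.mem_erase.mpr ⟨hj, Finset.mem_univ j⟩, rfl⟩))
      calc mu j = (mu j / mu istar) * mu istar := (div_mul_cancel₀ _ (hmu istar).ne').symm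
        _ ≤ F.max' hFne * mu istar := mul_le_mul_of_nonneg_right h1 (hmu istar).le
  have hlogq : Real.log q < 0 := Real.log_neg hq0 hq1
  have hnR : (0 : ℝ) < n := by exact_mod_cast hn
  set α : ℝ := -(δ * Real.log q) / (2 * n) with hαdef
  have hα : 0 < α := by
    apply div_pos
    · nlinarith
    · nlinarith
  set ρ : ℝ := Real.exp (δ * Real.log q / 2) with hρdef
  have hρ0 : 0 < ρ := Real.exp_pos _
  have hρ1 : ρ < 1 := by
    rw [hρdef, Real.exp_lt_one_iff]
    nlinarith
  have hαn : α * n = -(δ * Real.log q) / 2 := by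
    rw [hαdef]
    field_simp
  -- key exponent identity
  have hkey : ∀ N : ℕ, Real.exp (α * n * N) * q ^ (δ * N : ℝ) = ρ ^ N := by
    intro N
    rw [Real.rpow_def_of_pos hq0, ← Real.exp_add, hρdef, ← Real.exp_nat_mul]
    congr 1
    rw [hαn]
    ring
  -- the chain lemma
  have chain : ∀ s : Finset (Fin n), istar ∉ s → ∃ C : ℝ, 0 < C ∧ ∀ x : Fin n → ℕ,
      (∏ j ∈ s, w j (x j)) * w istar (x istar) ≤
        C * Real.exp (α * s.card * ((x istar + ∑ j ∈ s, x j : ℕ) : ℝ)) *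
          w istar (x istar + ∑ j ∈ s, x j) := by
    intro s
    induction s using Finset.induction_on with
    | empty => exact fun _ => ⟨1, one_pos, fun x => by simp⟩
    | @insert j s hj ih =>
      intro hins
      rw [Finset.mem_insert, not_or] at hins
      obtain ⟨C, hC, hCb⟩ := ih hins.2
      obtain ⟨c, hc, hcb⟩ := hbound' j α hα
      refine ⟨C * c, mul_pos hC hc, fun x => ?_⟩
      have hsum' : x istar + ∑ k ∈ insert j s, x k = (x istar + ∑ k ∈ s, x k) + x j := by
        rw [Finset.sum_insert hj]; ring
      set M : ℕ := x istar + ∑ k ∈ s, x k with hM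
      have h1 := hCb x
      have h2 : w j ((M + x j) - M) * w istar M ≤
          c * Real.exp (α * (M + x j : ℕ)) * w istar (M + x j) :=
        hcb (M + x j) M (Nat.le_add_right _ _)
      rw [Nat.add_sub_cancel_left] at h2
      rw [Finset.prod_insert hj, hsum']
      have hexps : Real.exp (α * s.card * M) * Real.exp (α * ((M + x j : ℕ) : ℝ)) ≤
          Real.exp (α * (insert j s).card * ((M + x j : ℕ) : ℝ)) := by
        rw [← Real.exp_add, Real.exp_le_exp, Finset.card_insert_of_notMem hj]
        push_cast
        have hcs : (0 : ℝ) ≤ (s.card : ℝ) := Nat.cast_nonneg _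
        have hxj : (0 : ℝ) ≤ (x j : ℝ) := Nat.cast_nonneg _
        nlinarith [mul_nonneg (mul_nonneg hα.le hcs) hxj]
      calc (w j (x j) * ∏ k ∈ s, w k (x k)) * w istar (x istar)
          = w j (x j) * ((∏ k ∈ s, w k (x k)) * w istar (x istar)) := by ring
        _ ≤ w j (x j) * (C * Real.exp (α * s.card * M) * w istar M) := by
            apply mul_le_mul_of_nonneg_left h1 (hw j _).le
        _ = (C * Real.exp (α * s.card * M)) * (w j (x j) * w istar M) := by ring
        _ ≤ (C * Real.exp (α * s.card * M)) *
            (c * Real.exp (α * ((M + x j : ℕ) : ℝ)) * w istar (M + x j)) := by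
            apply mul_le_mul_of_nonneg_left h2
            exact mul_nonneg hC.le (Real.exp_pos _).le
        _ = (C * c) * (Real.exp (α * s.card * M) * Real.exp (α * ((M + x j : ℕ) : ℝ))) *
            w istar (M + x j) := by ring
        _ ≤ (C * c) * Real.exp (α * (insert j s).card * ((M + x j : ℕ) : ℝ)) *
            w istar (M + x j) := by
            apply mul_le_mul_of_nonneg_right _ (hw istar _).le
            exact mul_le_mul_of_nonneg_left hexps (mul_pos hC hc).le
  -- global bound on w products
  obtain ⟨C, hC, hCb⟩ : ∃ C : ℝ, 0 < C ∧ ∀ N : ℕ, ∀ x : Fin n → ℕ, (∑ i, x i) = N →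
      ∏ i, w i (x i) ≤ C * Real.exp (α * n * N) * w istar N := by
    obtain ⟨C, hC, hCb⟩ := chain (Finset.univ.erase istar) (Finset.notMem_erase _ _)
    refine ⟨C, hC, fun N x hx => ?_⟩
    have h1 := hCb x
    rw [Finset.prod_erase_mul _ _ (Finset.mem_univ istar)] at h1
    rw [Finset.add_sum_erase _ _ (Finset.mem_univ istar)] at h1
    rw [hx] at h1
    refine h1.trans ?_
    apply mul_le_mul_of_nonneg_right _ (hw istar N).le
    apply mul_le_mul_of_nonneg_left _ hC.le
    apply Real.exp_le_exp.mpr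
    have hcle : ((Finset.univ.erase istar).card : ℝ) ≤ n := by
      have h2 : (Finset.univ.erase istar).card ≤ n := by
        calc (Finset.univ.erase istar).card ≤ (Finset.univ : Finset (Fin n)).card :=
            Finset.card_le_card (Finset.erase_subset _ _)
          _ = n := by simp
      exact_mod_cast h2
    have hN0 : (0 : ℝ) ≤ (N : ℝ) := Nat.cast_nonneg _
    nlinarith [mul_le_mul_of_nonneg_right (mul_le_mul_of_nonneg_left hcle hα.le) hN0]
  -- per-element bound on bad configurations
  have hbadterm : ∀ N : ℕ, ∀ x ∈ Finset.Nat.antidiagonalTuple n N,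
      ¬((1 - δ) * (N : ℝ) ≤ (x istar : ℝ)) →
      ∏ i, mu i ^ x i * w i (x i) ≤ (C * ρ ^ N) * (mu istar ^ N * w istar N) := by
    intro N x hx hcond
    rw [Finset.Nat.mem_antidiagonalTuple] at hx
    push_neg at hcond
    set S : ℕ := ∑ j ∈ Finset.univ.erase istar, x j with hS
    have hsplitN : x istar + S = N := by
      rw [hS, Finset.add_sum_erase _ _ (Finset.mem_univ istar), hx]
    have hSR : (x istar : ℝ) + (S : ℝ) = (N : ℝ) := by exact_mod_cast hsplitN
    -- mu part
    have hmupart : ∏ i, mu i ^ x i ≤ q ^ (δ * N : ℝ) * mu istar ^ N := by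
      have e1 : ∏ i, mu i ^ x i = mu istar ^ x istar * ∏ j ∈ Finset.univ.erase istar,
          mu j ^ x j := (Finset.mul_prod_erase _ _ (Finset.mem_univ istar)).symm
      have e2 : ∏ j ∈ Finset.univ.erase istar, mu j ^ x j ≤
          ∏ j ∈ Finset.univ.erase istar, (q * mu istar) ^ x j := by
        apply Finset.prod_le_prod
        · intro j _; exact pow_nonneg (hmu j).le _
        · intro j hj
          exact pow_le_pow_left₀ (hmu j).le (hqle j (Finset.mem_erase.mp hj).1) _
      have e3 : ∏ j ∈ Finset.univ.erase istar, (q * mu istar) ^ x j = (q * mu istar) ^ S := by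
        rw [hS, Finset.prod_pow_eq_pow_sum]
      have e4 : mu istar ^ x istar * (q * mu istar) ^ S = q ^ S * mu istar ^ N := by
        rw [mul_pow, ← hsplitN]
        ring
      have e5 : (q : ℝ) ^ S ≤ q ^ (δ * N : ℝ) := by
        rw [← Real.rpow_natCast q S]
        apply Real.rpow_le_rpow_of_exponent_ge hq0 hq1.le
        nlinarith
      calc ∏ i, mu i ^ x i ≤ mu istar ^ x istar * (q * mu istar) ^ S := by
            rw [e1]
            apply mul_le_mul_of_nonneg_left (le_trans e2 (le_of_eq e3))
              (pow_nonneg (hmu istar).le _)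
        _ = q ^ S * mu istar ^ N := e4
        _ ≤ q ^ (δ * N : ℝ) * mu istar ^ N :=
            mul_le_mul_of_nonneg_right e5 (pow_nonneg (hmu istar).le _)
    have hwpart : ∏ i, w i (x i) ≤ C * Real.exp (α * n * N) * w istar N := hCb N x hx
    calc ∏ i, mu i ^ x i * w i (x i) = (∏ i, mu i ^ x i) * ∏ i, w i (x i) := by
          rw [Finset.prod_mul_distrib]
      _ ≤ (q ^ (δ * N : ℝ) * mu istar ^ N) * (C * Real.exp (α * n * N) * w istar N) := by
          apply mul_le_mul hmupart hwpart
          · exact Finset.prod_pos (fun i _ => hw i _) |>.le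
          · apply mul_nonneg (Real.rpow_nonneg hq0.le _) (pow_nonneg (hmu istar).le _)
      _ = (C * (Real.exp (α * n * N) * q ^ (δ * N : ℝ))) * (mu istar ^ N * w istar N) := by
          ring
      _ = (C * ρ ^ N) * (mu istar ^ N * w istar N) := by rw [hkey N]
  -- bad sum and its ratio bound
  set B : ℕ → ℝ := fun N => ∑ x ∈ Finset.Nat.antidiagonalTuple n N,
    if (1 - δ) * (N : ℝ) ≤ (x istar : ℝ) then 0 else ∏ i, mu i ^ x i * w i (x i) with hBdef
  have hB0 : ∀ N, 0 ≤ B N := by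
    intro N
    simp only [hBdef]
    apply Finset.sum_nonneg
    intro x _
    split
    · exact le_refl 0
    · exact (hWpos x).le
  have hBle : ∀ N, B N ≤ ((N : ℝ) + 1) ^ n * (C * ρ ^ N) * (mu istar ^ N * w istar N) := by
    intro N
    have h1 : B N ≤ (Finset.Nat.antidiagonalTuple n N).card •
        ((C * ρ ^ N) * (mu istar ^ N * w istar N)) := by
      simp only [hBdef]
      apply Finset.sum_le_card_nsmul
      intro x hx
      split
      · exact mul_nonneg (mul_nonneg hC.le (pow_nonneg hρ0.le N))
          (mul_nonneg (pow_nonneg (hmu istar).le N) (hw istar N).le)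
      · exact hbadterm N x hx (by assumption)
    rw [nsmul_eq_mul] at h1
    refine h1.trans ?_
    have hnn : 0 ≤ C * ρ ^ N * (mu istar ^ N * w istar N) :=
      mul_nonneg (mul_nonneg hC.le (pow_nonneg hρ0.le N))
        (mul_nonneg (pow_nonneg (hmu istar).le N) (hw istar N).le)
    calc ((Finset.Nat.antidiagonalTuple n N).card : ℝ) *
          (C * ρ ^ N * (mu istar ^ N * w istar N))
        ≤ ((N : ℝ) + 1) ^ n * (C * ρ ^ N * (mu istar ^ N * w istar N)) :=
          mul_le_mul_of_nonneg_right (hcard N) hnn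
      _ = ((N : ℝ) + 1) ^ n * (C * ρ ^ N) * (mu istar ^ N * w istar N) := by ring
  set g : ℕ → ℝ := fun N => ((N : ℝ) + 1) ^ n * (C * ρ ^ N) with hgdef
  have hratio : ∀ N, B N / Z N ≤ g N := by
    intro N
    rw [div_le_iff₀ (hZpos N)]
    calc B N ≤ ((N : ℝ) + 1) ^ n * (C * ρ ^ N) * (mu istar ^ N * w istar N) := hBle N
      _ ≤ g N * Z N := by
        apply mul_le_mul_of_nonneg_left (hZlb N)
        apply mul_nonneg (by positivity) (mul_nonneg hC.le (pow_nonneg hρ0.le N))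
  have hgten : Tendsto g atTop (nhds 0) := by
    have h1 : Tendsto (fun m : ℕ => (m : ℝ) ^ n * ρ ^ m) atTop (nhds 0) :=
      tendsto_pow_const_mul_const_pow_of_lt_one n hρ0.le hρ1
    have h2 : Tendsto (fun N : ℕ => ((N + 1 : ℕ) : ℝ) ^ n * ρ ^ (N + 1)) atTop (nhds 0) :=
      h1.comp (tendsto_add_atTop_nat 1)
    have h3 : Tendsto (fun N : ℕ => (C / ρ) * (((N + 1 : ℕ) : ℝ) ^ n * ρ ^ (N + 1)))
        atTop (nhds 0) := by
      have := h2.const_mul (C / ρ)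
      simpa using this
    refine h3.congr ?_
    intro N
    simp only [hgdef]
    push_cast
    rw [pow_succ]
    have hρne : ρ ≠ 0 := hρ0.ne'
    field_simp
  have hBZ : Tendsto (fun N => B N / Z N) atTop (nhds 0) :=
    squeeze_zero (fun N => div_nonneg (hB0 N) (hZpos N).le) hratio hgten
  have heq : (fun N => (∑ x ∈ Finset.Nat.antidiagonalTuple n N,
      if (1 - δ) * (N : ℝ) ≤ (x istar : ℝ) then ∏ i, mu i ^ x i * w i (x i)
      else 0) / Z N) = fun N => 1 - B N / Z N := by
    funext N
    have hsum : (∑ x ∈ Finset.Nat.antidiagonalTuple n N,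
        if (1 - δ) * (N : ℝ) ≤ (x istar : ℝ) then ∏ i, mu i ^ x i * w i (x i)
        else 0) + B N = Z N := by
      simp only [hBdef]
      rw [hZ, ← Finset.sum_add_distrib]
      apply Finset.sum_congr rfl
      intro x _
      by_cases h : (1 - δ) * (N : ℝ) ≤ (x istar : ℝ) <;> simp [h]
    have hZne : Z N ≠ 0 := (hZpos N).ne'
    field_simp
    linarith
  rw [heq]
  have := tendsto_const_nhds (x := (1 : ℝ)) (f := atTop (α := ℕ)) |>.sub hBZ
  simpa using this
end

section
/- Under the hypotheses of the condensation theorem (dominating coordinate i* with μ_{i*} > μ_j for j ≠ i* and the sub-exponential cross-product bound on the weight functions), for every δ ∈ (0,1) the sum ∑_N π_N(x_{i*} ≤ (1-δ)N) is finite; in particular (by Borel–Cantelli) X_{i*}/N → 1 almost surely. -/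
open Filter Finset MeasureTheory

/-- Auxiliary summability lemma, parametric in `δ`. -/
theorem aux_condensation_summable (n : ℕ) (hn : 0 < n)
    (mu : Fin n → ℝ) (hmu : ∀ i, 0 < mu i)
    (w : Fin n → ℕ → ℝ) (hw : ∀ i m, 0 < w i m) (hw0 : ∀ i, w i 0 = 1)
    (istar : Fin n)
    (hdom : ∀ j, j ≠ istar → mu j < mu istar)
    (hbound : ∀ j : Fin n, ∀ α : ℝ, 0 < α → ∃ c : ℝ, 0 < c ∧ ∃ Mc : ℕ,
      ∀ M : ℕ, Mc < M → ∀ r : ℕ, r ≤ M →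
        w j (M - r) * w istar r ≤ c * Real.exp (α * M) * w istar M)
    (Z : ℕ → ℝ)
    (hZ : ∀ N, Z N = ∑ x ∈ Finset.Nat.antidiagonalTuple n N,
        ∏ i, mu i ^ x i * w i (x i))
    (δ : ℝ) (hδ0 : 0 < δ) (hδ1 : δ < 1) :
    Summable (fun N : ℕ =>
        (∑ x ∈ Finset.Nat.antidiagonalTuple n N,
          if (x istar : ℝ) ≤ (1 - δ) * (N : ℝ) then ∏ i, mu i ^ x i * w i (x i)
          else 0) / Z N) := by
  classical
  set E : Finset (Fin n) := (Finset.univ : Finset (Fin n)).erase istar with hE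
  set θ : ℝ := Finset.fold max (1/2) (fun j => mu j / mu istar) E with hθdef
  have hθhalf : (1/2 : ℝ) ≤ θ := (Finset.le_fold_max _).mpr (Or.inl le_rfl)
  have hθ0 : 0 < θ := lt_of_lt_of_le (by norm_num) hθhalf
  have hθ1 : θ < 1 := by
    rw [hθdef, Finset.fold_max_lt]
    refine ⟨by norm_num, fun j hj => ?_⟩
    have hjne : j ≠ istar := (Finset.mem_erase.mp hj).1
    exact (div_lt_one (hmu istar)).mpr (hdom j hjne)
  have hθj : ∀ j ∈ E, mu j ≤ θ * mu istar := by
    intro j hj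
    have h1 : mu j / mu istar ≤ θ := by
      rw [hθdef]
      exact (Finset.le_fold_max _).mpr (Or.inr ⟨j, hj, le_rfl⟩)
    exact (div_le_iff₀ (hmu istar)).mp h1
  have hlogθ : Real.log θ < 0 := Real.log_neg hθ0 hθ1
  have hnR : (0:ℝ) < n := by exact_mod_cast hn
  set α : ℝ := δ * (-Real.log θ) / (2 * n) with hαdef
  have hα : 0 < α := by
    apply div_pos (mul_pos hδ0 (by linarith)) (by positivity)
  -- uniform cross-product bound
  have hub : ∀ j : Fin n, ∃ c : ℝ, 0 < c ∧ ∀ M r : ℕ, r ≤ M →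
      w j (M - r) * w istar r ≤ c * (Real.exp (α * M) * w istar M) := by
    intro j
    obtain ⟨c, hc, Mc, hMc⟩ := hbound j α hα
    set Ssum : ℝ := ∑ M ∈ Finset.range (Mc + 1), ∑ r ∈ Finset.range (M + 1),
      (w j (M - r) * w istar r) / (Real.exp (α * M) * w istar M) with hSsumdef
    have hSsumnn : 0 ≤ Ssum := Finset.sum_nonneg fun M _ => Finset.sum_nonneg fun r _ => by
      have := hw j (M - r); have := hw istar r; have := hw istar M; positivity
    refine ⟨c + Ssum, by linarith, ?_⟩
    intro M r hrM
    have hd : 0 < Real.exp (α * M) * w istar M := by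
      have := hw istar M; positivity
    rcases lt_or_ge Mc M with h | h
    · have h1 := hMc M h r hrM
      rw [mul_assoc] at h1
      have h2 : c * (Real.exp (α * M) * w istar M) ≤
          (c + Ssum) * (Real.exp (α * M) * w istar M) :=
        mul_le_mul_of_nonneg_right (by linarith) hd.le
      linarith
    · have hmem1 : M ∈ Finset.range (Mc + 1) := Finset.mem_range.mpr (by omega)
      have hmem2 : r ∈ Finset.range (M + 1) := Finset.mem_range.mpr (by omega)
      have h1 : (w j (M - r) * w istar r) / (Real.exp (α * M) * w istar M) ≤
          ∑ r' ∈ Finset.range (M + 1),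
            (w j (M - r') * w istar r') / (Real.exp (α * M) * w istar M) := by
        apply Finset.single_le_sum _ hmem2
        intro r' _
        have := hw j (M - r'); have := hw istar r'; have := hw istar M; positivity
      have h2 : (∑ r' ∈ Finset.range (M + 1),
            (w j (M - r') * w istar r') / (Real.exp (α * M) * w istar M)) ≤ Ssum := by
        rw [hSsumdef]
        apply Finset.single_le_sum _ hmem1
        intro M' _
        apply Finset.sum_nonneg
        intro r' _
        have := hw j (M' - r'); have := hw istar r'; have := hw istar M'; positivity
      have h3 : (w j (M - r) * w istar r) / (Real.exp (α * M) * w istar M) ≤ c + Ssum := by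
        linarith
      exact (div_le_iff₀ hd).mp h3
  choose cf hcf0 hcfb using hub
  -- iterated product bound on the weights
  have hprodw : ∀ (s : Finset (Fin n)), istar ∉ s → ∀ (m : ℕ) (x : Fin n → ℕ),
      w istar m * ∏ j ∈ s, w j (x j) ≤
        (∏ j ∈ s, cf j) *
          (Real.exp (α * s.card * ((m + ∑ j ∈ s, x j : ℕ) : ℝ)) *
            w istar (m + ∑ j ∈ s, x j)) := by
    intro s
    induction s using Finset.induction_on with
    | empty => intro _ m x; simp
    | @insert a s ha IH =>
      intro hni m x
      have hia : istar ∉ s := fun h => hni (Finset.mem_insert_of_mem h)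
      set T0 : ℕ := m + ∑ j ∈ s, x j with hT0
      have hIH := IH hia m x
      have key := hcfb a (T0 + x a) T0 (Nat.le_add_right _ _)
      rw [Nat.add_sub_cancel_left] at key
      have hP : 0 < ∏ j ∈ s, cf j := Finset.prod_pos fun j _ => hcf0 j
      have hexp : Real.exp (α * s.card * (T0 : ℝ)) * Real.exp (α * ((T0 : ℝ) + (x a : ℝ))) ≤
          Real.exp (α * ((s.card : ℝ) + 1) * ((T0 : ℝ) + (x a : ℝ))) := by
        rw [← Real.exp_add]
        apply Real.exp_le_exp.mpr
        have h1 : (0:ℝ) ≤ (x a : ℝ) := Nat.cast_nonneg _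
        have h2 : (0:ℝ) ≤ (s.card : ℝ) := Nat.cast_nonneg _
        nlinarith [hα.le, mul_nonneg (mul_nonneg hα.le h2) h1]
      have keyR : w a (x a) * w istar T0 ≤
          cf a * (Real.exp (α * ((T0:ℝ) + (x a : ℝ))) * w istar (T0 + x a)) := by
        have := key
        rwa [Nat.cast_add] at this
      calc w istar m * ∏ j ∈ insert a s, w j (x j)
          = w a (x a) * (w istar m * ∏ j ∈ s, w j (x j)) := by
            rw [Finset.prod_insert ha]; ring
        _ ≤ w a (x a) * ((∏ j ∈ s, cf j) *
              (Real.exp (α * s.card * (T0 : ℝ)) * w istar T0)) :=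
            mul_le_mul_of_nonneg_left hIH (hw a (x a)).le
        _ = ((∏ j ∈ s, cf j) * Real.exp (α * s.card * (T0 : ℝ))) *
              (w a (x a) * w istar T0) := by ring
        _ ≤ ((∏ j ∈ s, cf j) * Real.exp (α * s.card * (T0 : ℝ))) *
              (cf a * (Real.exp (α * ((T0:ℝ) + (x a : ℝ))) * w istar (T0 + x a))) := by
            exact mul_le_mul_of_nonneg_left keyR
              (mul_nonneg hP.le (Real.exp_pos _).le)
        _ = (cf a * ∏ j ∈ s, cf j) *
              ((Real.exp (α * s.card * (T0 : ℝ)) * Real.exp (α * ((T0:ℝ) + (x a : ℝ)))) *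
                w istar (T0 + x a)) := by ring
        _ ≤ (cf a * ∏ j ∈ s, cf j) *
              (Real.exp (α * ((s.card : ℝ) + 1) * ((T0 : ℝ) + (x a : ℝ))) *
                w istar (T0 + x a)) := by
            exact mul_le_mul_of_nonneg_left
              (mul_le_mul_of_nonneg_right hexp (hw istar _).le)
              (mul_nonneg (hcf0 a).le hP.le)
        _ = (∏ j ∈ insert a s, cf j) *
              (Real.exp (α * (insert a s).card * ((m + ∑ j ∈ insert a s, x j : ℕ) : ℝ)) *
                w istar (m + ∑ j ∈ insert a s, x j)) := by
            rw [Finset.prod_insert ha, Finset.sum_insert ha,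
              Finset.card_insert_of_notMem ha]
            have hmn : m + (x a + ∑ j ∈ s, x j) = T0 + x a := by rw [hT0]; ring
            rw [hmn]
            push_cast
            ring_nf
  -- lower bound on the partition function
  have hZlow : ∀ N, mu istar ^ N * w istar N ≤ Z N := by
    intro N
    rw [hZ]
    have hmem : (fun i => if i = istar then N else 0) ∈ Finset.Nat.antidiagonalTuple n N := by
      rw [Finset.Nat.mem_antidiagonalTuple]
      simp
    have h1 := Finset.single_le_sum
      (f := fun x : Fin n → ℕ => ∏ i, mu i ^ x i * w i (x i))
      (fun x _ => Finset.prod_nonneg fun i _ => by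
        have := hmu i; have := hw i (x i); positivity) hmem
    have h2 : (∏ i, mu i ^ (if i = istar then N else 0) *
        w i (if i = istar then N else 0)) = mu istar ^ N * w istar N := by
      rw [Finset.prod_eq_single_of_mem istar (Finset.mem_univ _)]
      · simp
      · intro j _ hj
        simp [hj, hw0 j]
    rw [← h2]
    exact h1
  have hZpos : ∀ N, 0 < Z N := fun N => lt_of_lt_of_le
    (by have := hmu istar; have := hw istar N; positivity) (hZlow N)
  set C : ℝ := ∏ j ∈ E, cf j with hCdef
  have hC0 : 0 < C := Finset.prod_pos fun j _ => hcf0 j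
  have hEcard : E.card = n - 1 := by
    rw [hE, Finset.card_erase_of_mem (Finset.mem_univ _), Finset.card_univ, Fintype.card_fin]
  set q : ℝ := θ ^ δ * Real.exp (α * ((n - 1 : ℕ) : ℝ)) with hqdef
  have hq0 : 0 < q := mul_pos (Real.rpow_pos_of_pos hθ0 δ) (Real.exp_pos _)
  have hq1 : q < 1 := by
    rw [hqdef, Real.rpow_def_of_pos hθ0, ← Real.exp_add, Real.exp_lt_one_iff]
    have hn1 : ((n - 1 : ℕ) : ℝ) ≤ (n : ℝ) := by exact_mod_cast Nat.sub_le n 1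
    have hαn : α * (n : ℝ) = δ * (-Real.log θ) / 2 := by
      rw [hαdef]; field_simp
    have h1 : α * ((n - 1 : ℕ) : ℝ) ≤ α * (n : ℝ) :=
      mul_le_mul_of_nonneg_left hn1 hα.le
    nlinarith
  -- per-configuration bound
  have hterm : ∀ N : ℕ, ∀ x ∈ Finset.Nat.antidiagonalTuple n N,
      (x istar : ℝ) ≤ (1 - δ) * (N : ℝ) →
      ∏ i, mu i ^ x i * w i (x i) ≤ C * q ^ N * (mu istar ^ N * w istar N) := by
    intro N x hx hcond
    have hsum : ∑ i, x i = N := (Finset.Nat.mem_antidiagonalTuple).mp hx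
    set K : ℕ := ∑ j ∈ E, x j with hK
    have hxi : K + x istar = N := by
      rw [hK, hE, Finset.sum_erase_add _ _ (Finset.mem_univ istar), hsum]
    have hKR : δ * (N : ℝ) ≤ (K : ℝ) := by
      have h1 : (K : ℝ) + (x istar : ℝ) = (N : ℝ) := by exact_mod_cast hxi
      nlinarith
    have hmuprod : ∏ i, mu i ^ x i ≤ mu istar ^ N * θ ^ (δ * (N : ℝ)) := by
      calc ∏ i, mu i ^ x i
          = mu istar ^ x istar * ∏ j ∈ E, mu j ^ x j := by
            rw [hE]
            exact (Finset.mul_prod_erase Finset.univ (fun j => mu j ^ x j)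
              (Finset.mem_univ istar)).symm
        _ ≤ mu istar ^ x istar * ∏ j ∈ E, (θ * mu istar) ^ x j := by
            apply mul_le_mul_of_nonneg_left _ (pow_nonneg (hmu istar).le _)
            exact Finset.prod_le_prod (fun j _ => pow_nonneg (hmu j).le _)
              (fun j hj => pow_le_pow_left₀ (hmu j).le (hθj j hj) _)
        _ = mu istar ^ x istar * (θ ^ K * mu istar ^ K) := by
            simp [mul_pow, Finset.prod_mul_distrib, Finset.prod_pow_eq_pow_sum, hK]
        _ = mu istar ^ N * θ ^ K := by
            rw [show mu istar ^ x istar * (θ ^ K * mu istar ^ K)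
                = mu istar ^ (K + x istar) * θ ^ K by rw [pow_add]; ring, hxi]
        _ ≤ mu istar ^ N * θ ^ (δ * (N : ℝ)) := by
            apply mul_le_mul_of_nonneg_left _ (pow_nonneg (hmu istar).le _)
            rw [← Real.rpow_natCast θ K]
            exact Real.rpow_le_rpow_of_exponent_ge hθ0 hθ1.le hKR
    have histarE : istar ∉ E := by simp [hE]
    have hwprod : ∏ i, w i (x i) ≤ C * (Real.exp (α * ((n - 1 : ℕ) : ℝ) * (N : ℝ)) * w istar N) := by
      have h1 := hprodw E histarE (x istar) x
      have h2 : x istar + ∑ j ∈ E, x j = N := by omega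
      rw [h2, hEcard] at h1
      calc ∏ i, w i (x i)
          = w istar (x istar) * ∏ j ∈ E, w j (x j) := by
            rw [hE]
            exact (Finset.mul_prod_erase Finset.univ (fun j => w j (x j))
              (Finset.mem_univ istar)).symm
        _ ≤ C * (Real.exp (α * ((n - 1 : ℕ) : ℝ) * (N : ℝ)) * w istar N) := h1
    have hqN : q ^ N = θ ^ (δ * (N : ℝ)) * Real.exp (α * ((n - 1 : ℕ) : ℝ) * (N : ℝ)) := by
      rw [hqdef, mul_pow]
      congr 1
      · rw [← Real.rpow_natCast (θ ^ δ) N, ← Real.rpow_mul hθ0.le]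
      · rw [← Real.exp_nat_mul]; ring_nf
    calc ∏ i, mu i ^ x i * w i (x i)
        = (∏ i, mu i ^ x i) * ∏ i, w i (x i) := Finset.prod_mul_distrib
      _ ≤ (mu istar ^ N * θ ^ (δ * (N : ℝ))) *
            (C * (Real.exp (α * ((n - 1 : ℕ) : ℝ) * (N : ℝ)) * w istar N)) := by
          apply mul_le_mul hmuprod hwprod
            (Finset.prod_nonneg fun i _ => (hw i (x i)).le)
            (mul_nonneg (pow_nonneg (hmu istar).le _)
              (Real.rpow_pos_of_pos hθ0 _).le)
      _ = C * q ^ N * (mu istar ^ N * w istar N) := by rw [hqN]; ring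
  -- bound the sum
  have hSle : ∀ N : ℕ,
      (∑ x ∈ Finset.Nat.antidiagonalTuple n N,
        if (x istar : ℝ) ≤ (1 - δ) * (N : ℝ) then ∏ i, mu i ^ x i * w i (x i) else 0)
      ≤ ((N + 1 : ℕ) : ℝ) ^ n * (C * q ^ N * (mu istar ^ N * w istar N)) := by
    intro N
    have hconst0 : 0 ≤ C * q ^ N * (mu istar ^ N * w istar N) := by
      have := hmu istar; have := hw istar N; positivity
    have h1 : (∑ x ∈ Finset.Nat.antidiagonalTuple n N,
        if (x istar : ℝ) ≤ (1 - δ) * (N : ℝ) then ∏ i, mu i ^ x i * w i (x i) else 0)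
        ≤ ∑ _x ∈ Finset.Nat.antidiagonalTuple n N,
            C * q ^ N * (mu istar ^ N * w istar N) := by
      apply Finset.sum_le_sum
      intro x hx
      by_cases hc : (x istar : ℝ) ≤ (1 - δ) * (N : ℝ)
      · rw [if_pos hc]; exact hterm N x hx hc
      · rw [if_neg hc]; exact hconst0
    have hcard : (Finset.Nat.antidiagonalTuple n N).card ≤ (N + 1) ^ n := by
      have hsub : Finset.Nat.antidiagonalTuple n N ⊆
          Fintype.piFinset (fun _ : Fin n => Finset.range (N + 1)) := by
        intro x hx
        rw [Fintype.mem_piFinset]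
        intro i
        rw [Finset.mem_range]
        have hsum : ∑ j, x j = N := (Finset.Nat.mem_antidiagonalTuple).mp hx
        have : x i ≤ N := by
          rw [← hsum]
          exact Finset.single_le_sum (fun j _ => Nat.zero_le _) (Finset.mem_univ i)
        omega
      calc (Finset.Nat.antidiagonalTuple n N).card
          ≤ (Fintype.piFinset (fun _ : Fin n => Finset.range (N + 1))).card :=
            Finset.card_le_card hsub
        _ = (N + 1) ^ n := by
            rw [Fintype.card_piFinset]
            simp
    calc (∑ x ∈ Finset.Nat.antidiagonalTuple n N,
        if (x istar : ℝ) ≤ (1 - δ) * (N : ℝ) then ∏ i, mu i ^ x i * w i (x i) else 0)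
        ≤ ∑ _x ∈ Finset.Nat.antidiagonalTuple n N,
            C * q ^ N * (mu istar ^ N * w istar N) := h1
      _ = ((Finset.Nat.antidiagonalTuple n N).card : ℝ) *
            (C * q ^ N * (mu istar ^ N * w istar N)) := by
          rw [Finset.sum_const, nsmul_eq_mul]
      _ ≤ ((N + 1 : ℕ) : ℝ) ^ n * (C * q ^ N * (mu istar ^ N * w istar N)) := by
          apply mul_le_mul_of_nonneg_right _ hconst0
          exact_mod_cast hcard
  have hdiv : ∀ N : ℕ,
      (∑ x ∈ Finset.Nat.antidiagonalTuple n N,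
        if (x istar : ℝ) ≤ (1 - δ) * (N : ℝ) then ∏ i, mu i ^ x i * w i (x i) else 0) / Z N
      ≤ ((N + 1 : ℕ) : ℝ) ^ n * (C * q ^ N) := by
    intro N
    have hD : 0 < mu istar ^ N * w istar N := by
      have := hmu istar; have := hw istar N; positivity
    have h1 := div_le_div₀ (by positivity) (hSle N) hD (hZlow N)
    calc (∑ x ∈ Finset.Nat.antidiagonalTuple n N,
        if (x istar : ℝ) ≤ (1 - δ) * (N : ℝ) then ∏ i, mu i ^ x i * w i (x i) else 0) / Z N
        ≤ (((N + 1 : ℕ) : ℝ) ^ n * (C * q ^ N * (mu istar ^ N * w istar N))) /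
            (mu istar ^ N * w istar N) := h1
      _ = ((N + 1 : ℕ) : ℝ) ^ n * (C * q ^ N) := by
          rw [mul_div_assoc, mul_div_cancel_right₀ _ hD.ne']
  have hnonneg : ∀ N : ℕ, 0 ≤
      (∑ x ∈ Finset.Nat.antidiagonalTuple n N,
        if (x istar : ℝ) ≤ (1 - δ) * (N : ℝ) then ∏ i, mu i ^ x i * w i (x i) else 0) / Z N := by
    intro N
    apply div_nonneg _ (hZpos N).le
    apply Finset.sum_nonneg
    intro x _
    by_cases hc : (x istar : ℝ) ≤ (1 - δ) * (N : ℝ)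
    · rw [if_pos hc]
      exact Finset.prod_nonneg fun i _ => by
        have := hmu i; have := hw i (x i); positivity
    · rw [if_neg hc]
  have hgeo : Summable (fun N : ℕ => ((N + 1 : ℕ) : ℝ) ^ n * (C * q ^ N)) := by
    have h0 : Summable (fun m : ℕ => (m : ℝ) ^ n * q ^ m) :=
      summable_pow_mul_geometric_of_norm_lt_one n
        (by rw [Real.norm_eq_abs, abs_of_pos hq0]; exact hq1)
    have h1 : Summable (fun N : ℕ => ((N + 1 : ℕ) : ℝ) ^ n * q ^ (N + 1)) := by
      have := (summable_nat_add_iff (f := fun m : ℕ => (m : ℝ) ^ n * q ^ m) 1).mpr h0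
      exact this.congr fun N => by push_cast; ring
    have h2 := h1.mul_left (C / q)
    apply h2.congr
    intro N
    have hqne : q ≠ 0 := ne_of_gt hq0
    field_simp
    ring
  exact Summable.of_nonneg_of_le hnonneg hdiv hgeo

theorem condensation_summable_and_borel_cantelli (n : ℕ) (hn : 0 < n)
    (mu : Fin n → ℝ) (hmu : ∀ i, 0 < mu i)
    (w : Fin n → ℕ → ℝ) (hw : ∀ i m, 0 < w i m) (hw0 : ∀ i, w i 0 = 1)
    (istar : Fin n)
    (hdom : ∀ j, j ≠ istar → mu j < mu istar)
    (hbound : ∀ j : Fin n, ∀ α : ℝ, 0 < α → ∃ c : ℝ, 0 < c ∧ ∃ Mc : ℕ,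
      ∀ M : ℕ, Mc < M → ∀ r : ℕ, r ≤ M →
        w j (M - r) * w istar r ≤ c * Real.exp (α * M) * w istar M)
    (Z : ℕ → ℝ)
    (hZ : ∀ N, Z N = ∑ x ∈ Finset.Nat.antidiagonalTuple n N,
        ∏ i, mu i ^ x i * w i (x i))
    {Ω : Type*} [MeasurableSpace Ω] (P : Measure Ω) [IsProbabilityMeasure P]
    (X : ℕ → Ω → (Fin n → ℕ))
    (hlaw : ∀ N : ℕ, ∀ s : Set (Fin n → ℕ),
      (P {ω | X N ω ∈ s}).toReal =
        (∑ x ∈ Finset.Nat.antidiagonalTuple n N,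
          s.indicator (fun x => ∏ i, mu i ^ x i * w i (x i)) x) / Z N) :
    ∀ δ : ℝ, 0 < δ → δ < 1 →
      Summable (fun N : ℕ =>
        (∑ x ∈ Finset.Nat.antidiagonalTuple n N,
          if (x istar : ℝ) ≤ (1 - δ) * (N : ℝ) then ∏ i, mu i ^ x i * w i (x i)
          else 0) / Z N) ∧
      ∀ᵐ ω ∂P, Tendsto (fun N => (X N ω istar : ℝ) / N) atTop (nhds 1) := by
  intro δ hδ0 hδ1
  constructor
  · exact aux_condensation_summable n hn mu hmu w hw hw0 istar hdom hbound Z hZ δ hδ0 hδ1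
  -- Borel–Cantelli part
  have hae_sum : ∀ᵐ ω ∂P, ∀ N : ℕ, ∑ i, X N ω i = N := by
    rw [MeasureTheory.ae_all_iff]
    intro N
    have h := hlaw N {x | ∑ i, x i ≠ N}
    have hz : (∑ x ∈ Finset.Nat.antidiagonalTuple n N,
        ({x : Fin n → ℕ | ∑ i, x i ≠ N}).indicator
          (fun x => ∏ i, mu i ^ x i * w i (x i)) x) = 0 := by
      apply Finset.sum_eq_zero
      intro x hx
      apply Set.indicator_of_notMem
      simp only [Set.mem_setOf_eq, not_not]
      exact (Finset.Nat.mem_antidiagonalTuple).mp hx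
    rw [hz, zero_div] at h
    have hP0 : P {ω | X N ω ∈ {x : Fin n → ℕ | ∑ i, x i ≠ N}} = 0 := by
      rcases (ENNReal.toReal_eq_zero_iff _).mp h with h0 | htop
      · exact h0
      · exact absurd htop (measure_ne_top P _)
    rw [ae_iff]
    convert hP0 using 2
    rfl
  have hBC : ∀ k : ℕ, ∀ᵐ ω ∂P, ∀ᶠ N in atTop,
      ¬ ((X N ω istar : ℝ) ≤ (1 - 1/((k:ℝ)+2)) * (N : ℝ)) := by
    intro k
    set δk : ℝ := 1/((k:ℝ)+2) with hδk
    have hk2 : (0:ℝ) < (k:ℝ) + 2 := by positivity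
    have hδk0 : 0 < δk := by rw [hδk]; positivity
    have hδk1 : δk < 1 := by
      rw [hδk, div_lt_one hk2]
      have : (0:ℝ) ≤ (k:ℝ) := Nat.cast_nonneg k
      linarith
    have hsummable := aux_condensation_summable n hn mu hmu w hw hw0 istar hdom hbound Z hZ
      δk hδk0 hδk1
    set sev : ℕ → Set Ω := fun N => {ω | (X N ω istar : ℝ) ≤ (1 - δk) * (N : ℝ)} with hsev
    have hPs : ∀ N : ℕ, (P (sev N)).toReal =
        (∑ x ∈ Finset.Nat.antidiagonalTuple n N,
          if (x istar : ℝ) ≤ (1 - δk) * (N : ℝ) then ∏ i, mu i ^ x i * w i (x i)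
          else 0) / Z N := by
      intro N
      have h := hlaw N {x : Fin n → ℕ | (x istar : ℝ) ≤ (1 - δk) * (N : ℝ)}
      have hind : (∑ x ∈ Finset.Nat.antidiagonalTuple n N,
          ({x : Fin n → ℕ | (x istar : ℝ) ≤ (1 - δk) * (N : ℝ)}).indicator
            (fun x => ∏ i, mu i ^ x i * w i (x i)) x)
          = ∑ x ∈ Finset.Nat.antidiagonalTuple n N,
            if (x istar : ℝ) ≤ (1 - δk) * (N : ℝ) then ∏ i, mu i ^ x i * w i (x i)
            else 0 := by
        apply Finset.sum_congr rfl
        intro x _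
        by_cases hc : (x istar : ℝ) ≤ (1 - δk) * (N : ℝ)
        · rw [Set.indicator_of_mem
            (show x ∈ {x : Fin n → ℕ | (x istar : ℝ) ≤ (1 - δk) * (N : ℝ)} from hc), if_pos hc]
        · rw [Set.indicator_of_notMem
            (show x ∉ {x : Fin n → ℕ | (x istar : ℝ) ≤ (1 - δk) * (N : ℝ)} from hc), if_neg hc]
      rw [hind] at h
      exact h
    have hS : Summable (fun N => (P (sev N)).toReal) :=
      hsummable.congr fun N => (hPs N).symm
    have htsum : ∑' N, P (sev N) ≠ ⊤ := by
      have heq : ∑' N, P (sev N) = ENNReal.ofReal (∑' N, (P (sev N)).toReal) := by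
        rw [ENNReal.ofReal_tsum_of_nonneg (fun N => ENNReal.toReal_nonneg) hS]
        exact tsum_congr fun N => (ENNReal.ofReal_toReal (measure_ne_top P _)).symm
      rw [heq]
      exact ENNReal.ofReal_ne_top
    filter_upwards [MeasureTheory.ae_eventually_notMem htsum] with ω hω
    exact hω
  have hBC' := MeasureTheory.ae_all_iff.mpr hBC
  filter_upwards [hae_sum, hBC'] with ω h1 h2
  rw [Metric.tendsto_atTop]
  intro ε hε
  obtain ⟨k, hk⟩ := exists_nat_gt (1/ε)
  have hδkε : 1/((k:ℝ)+2) < ε := by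
    have hk2 : (0:ℝ) < (k:ℝ) + 2 := by positivity
    rw [div_lt_iff₀ hk2]
    have h3 : 1/ε < (k:ℝ) + 2 := by linarith
    calc (1:ℝ) = ε * (1/ε) := by field_simp
      _ < ε * ((k:ℝ) + 2) := mul_lt_mul_of_pos_left h3 hε
  obtain ⟨N0, hN0⟩ := (Filter.eventually_atTop).mp (h2 k)
  refine ⟨max N0 1, fun N hN => ?_⟩
  have hN1 : 1 ≤ N := le_trans (le_max_right N0 1) hN
  have hNN0 : N0 ≤ N := le_trans (le_max_left N0 1) hN
  have hNpos : (0:ℝ) < (N:ℝ) := by exact_mod_cast hN1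
  have hX_le : (X N ω istar : ℝ) ≤ (N:ℝ) := by
    have h3 : X N ω istar ≤ ∑ i, X N ω i :=
      Finset.single_le_sum (fun i _ => Nat.zero_le _) (Finset.mem_univ istar)
    rw [h1 N] at h3
    exact_mod_cast h3
  have hgt : (1 - 1/((k:ℝ)+2)) * (N:ℝ) < (X N ω istar : ℝ) := lt_of_not_ge (hN0 N hNN0)
  have hdivle : (X N ω istar : ℝ) / (N:ℝ) ≤ 1 := (div_le_one hNpos).mpr hX_le
  have hdivgt : 1 - 1/((k:ℝ)+2) < (X N ω istar : ℝ) / (N:ℝ) :=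
    (lt_div_iff₀ hNpos).mpr hgt
  rw [Real.dist_eq, abs_of_nonpos (by linarith)]
  linarith
end

section
/- Let f(m) = (λ^m/m!) ∏_{l=1}^m (1 + β₂(l-1) + β₃(l-1)(l-2)) with λ > 0, β₂ ≥ 0, β₃ > 0. Then there exist c > 0 and N₀ such that for all N > N₀ and all integers i with 3 ≤ i ≤ N/2: f(N-i)f(i) ≤ f(N-3)f(3). -/
open Finset

theorem threemolecular_cross_product_bound (lam beta2 beta3 : ℝ)
    (hlam : 0 < lam) (hbeta2 : 0 ≤ beta2) (hbeta3 : 0 < beta3)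
    (f : ℕ → ℝ)
    (hf : ∀ m, f m = lam ^ m / m.factorial *
      ∏ j ∈ Finset.range m, (1 + beta2 * (j : ℝ) + beta3 * (j : ℝ) * ((j : ℝ) - 1))) :
    ∃ c : ℝ, 0 < c ∧ ∃ N₀ : ℕ, ∀ N : ℕ, N₀ < N →
      ∀ i : ℕ, 3 ≤ i → 2 * i ≤ N → f (N - i) * f i ≤ f (N - 3) * f 3 := by
  have hterm : ∀ j : ℕ, (1:ℝ) ≤ 1 + beta2 * (j : ℝ) + beta3 * (j : ℝ) * ((j : ℝ) - 1) := by
    intro j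
    rcases Nat.eq_zero_or_pos j with h | h
    · subst h; simp
    · have hj : (1:ℝ) ≤ j := by exact_mod_cast h
      have h1 : 0 ≤ beta2 * (j:ℝ) := mul_nonneg hbeta2 (by linarith)
      have h2 : 0 ≤ beta3 * (j:ℝ) * ((j:ℝ)-1) :=
        mul_nonneg (mul_nonneg hbeta3.le (by linarith)) (by linarith)
      linarith
  have hfpos : ∀ m, 0 < f m := by
    intro m
    rw [hf]
    apply mul_pos
    · positivity
    · exact Finset.prod_pos fun j _ => lt_of_lt_of_le one_pos (hterm j)
  have hsucc : ∀ m : ℕ, f (m+1) = f m * (lam / ((m:ℝ)+1) *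
      (1 + beta2 * (m : ℝ) + beta3 * (m : ℝ) * ((m : ℝ) - 1))) := by
    intro m
    rw [hf, hf, Finset.prod_range_succ]
    have hfac : (((m+1).factorial : ℕ) : ℝ) = ((m:ℝ)+1) * m.factorial := by
      rw [Nat.factorial_succ]; push_cast; ring
    have h1 : ((m:ℝ)+1) ≠ 0 := by positivity
    have h2 : ((m.factorial : ℕ) : ℝ) ≠ 0 := by positivity
    rw [hfac]
    generalize (∏ j ∈ Finset.range m, (1 + beta2 * (j : ℝ) + beta3 * (j : ℝ) * ((j : ℝ) - 1))) = P
    field_simp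
    ring
  refine ⟨1, one_pos, ⌈4/beta3⌉₊ + 2, ?_⟩
  intro N hN i hi3
  induction i, hi3 using Nat.le_induction with
  | base => intro _; exact le_rfl
  | succ i hi ih =>
    intro h2
    set b := N - (i+1) with hb
    have hib : i + 1 ≤ b := by omega
    have hNi : N - i = b + 1 := by omega
    have h2b : N ≤ 2 * b := by omega
    have hNge : (4:ℝ)/beta3 ≤ N := by
      refine le_trans (Nat.le_ceil _) ?_
      exact_mod_cast (by omega : ⌈4/beta3⌉₊ ≤ N)
    have hbN : (4:ℝ) ≤ beta3 * N := by
      rw [div_le_iff₀ hbeta3] at hNge; linarith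
    have hbr : (N:ℝ) ≤ 2 * b := by exact_mod_cast h2b
    have hb1 : (1:ℝ) ≤ beta3 * b := by nlinarith
    have hir : (3:ℝ) ≤ (i:ℝ) := by exact_mod_cast hi
    have hba : (i:ℝ) ≤ (b:ℝ) := by exact_mod_cast (by omega : i ≤ b)
    have hbracket : 0 ≤ beta2 - 1 + beta3 * ((i:ℝ)*b + i + b - 1) := by
      nlinarith [mul_nonneg hbeta3.le (show (0:ℝ) ≤ (i:ℝ)*b + i - 1 by nlinarith)]
    have hkey : ((b:ℝ)+1) * (1 + beta2 * (i:ℝ) + beta3 * (i:ℝ) * ((i:ℝ) - 1)) ≤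
        ((i:ℝ)+1) * (1 + beta2 * (b:ℝ) + beta3 * (b:ℝ) * ((b:ℝ) - 1)) := by
      nlinarith [mul_nonneg (sub_nonneg.2 hba) hbracket]
    have hpos1 : (0:ℝ) < (i:ℝ)+1 := by positivity
    have hpos2 : (0:ℝ) < (b:ℝ)+1 := by positivity
    have hratio : lam/((i:ℝ)+1) * (1 + beta2 * (i:ℝ) + beta3 * (i:ℝ) * ((i:ℝ) - 1)) ≤
        lam/((b:ℝ)+1) * (1 + beta2 * (b:ℝ) + beta3 * (b:ℝ) * ((b:ℝ) - 1)) := by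
      rw [div_mul_eq_mul_div, div_mul_eq_mul_div, div_le_div_iff₀ hpos1 hpos2]
      nlinarith [mul_le_mul_of_nonneg_left hkey hlam.le]
    have step : f (N - (i+1)) * f (i+1) ≤ f (N - i) * f i := by
      rw [hNi, hsucc i, hsucc b, ← hb]
      nlinarith [mul_le_mul_of_nonneg_left hratio
        (mul_nonneg (hfpos b).le (hfpos i).le)]
    exact step.trans (ih (by omega))
end

section
/- Let f₁, f₂ be product-form functions f_i(m) = (λ_i^m/m!) ∏_{l=1}^m (1 + ∑_{k=2}^{n_i} β_i^k ∏_{r=1}^{k-1}(l-r)) with n₁ ≥ 3, n₁ ≥ n₂, all λ_i > 0, β_i^k ≥ 0 and λ₁β₁^{n₁} > λ₂β₂^{n₁} (where β₂^{n₁} = 0 if n₂ < n₁, and β₁^{n₁} > 0). Then ∑_{i=1}^{N-1} f₁(i) f₂(N-i) = o(f₁(N)) as N → ∞. -/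
open Filter Finset

/-- Casting the real falling-factorial product to `Nat.descFactorial`. -/
lemma aux_prod_cast (j : ℕ) : ∀ m : ℕ,
    (∏ r ∈ Finset.range m, ((j : ℝ) - (r : ℕ))) = (j.descFactorial m : ℝ)
  | 0 => by simp
  | m + 1 => by
    rw [Finset.prod_range_succ, aux_prod_cast j m, Nat.descFactorial_succ]
    by_cases h : m ≤ j
    · rw [Nat.cast_mul, Nat.cast_sub h]
      ring
    · have h0 : j.descFactorial m = 0 :=
        Nat.descFactorial_of_lt (by omega)
      rw [h0]
      simp

lemma aux_fact_prod (v : ℕ) : ∀ u : ℕ,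
    v.factorial * ∏ j ∈ Finset.range u, (v + 1 + j) = (v + u).factorial
  | 0 => by simp
  | u + 1 => by
    rw [Finset.prod_range_succ, ← mul_assoc, aux_fact_prod v u, ← Nat.add_assoc]
    rw [Nat.factorial_succ (v + u)]
    ring

/-- Lower bound for the descending factorial: `(1-ε) (j+1)^d ≤ descFactorial j d`. -/
lemma aux_desc_lower (d j : ℕ) (hd : 1 ≤ d) {ε : ℝ} (hε : 0 < ε) (hε1 : ε ≤ 1)
    (hj : (d : ℝ) ^ 2 / ε ≤ (j : ℝ) + 1) :
    (1 - ε) * ((j : ℝ) + 1) ^ d ≤ (j.descFactorial d : ℝ) := by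
  set x : ℝ := (j : ℝ) + 1 with hx_def
  have hx0 : (0 : ℝ) < x := by positivity
  have hd1 : (1 : ℝ) ≤ (d : ℝ) := by exact_mod_cast hd
  have hd2x : (d : ℝ) ^ 2 ≤ x := by
    have h1 : (d : ℝ) ^ 2 ≤ (d : ℝ) ^ 2 / ε := by
      rw [le_div_iff₀ hε]
      nlinarith [sq_nonneg (d : ℝ)]
    linarith
  have hdx : (d : ℝ) ≤ x := by nlinarith
  have hdj : d ≤ j + 1 := by
    have : (d : ℝ) ≤ ((j + 1 : ℕ) : ℝ) := by push_cast; linarith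
    exact_mod_cast this
  have hcast : ((j + 1 - d : ℕ) : ℝ) = x - d := by
    rw [Nat.cast_sub hdj]; push_cast; ring
  have h2 : (x - (d : ℝ)) ^ d ≤ (j.descFactorial d : ℝ) := by
    have hnat := Nat.pow_sub_le_descFactorial j d
    have : (((j + 1 - d) ^ d : ℕ) : ℝ) ≤ (j.descFactorial d : ℝ) := by exact_mod_cast hnat
    rwa [Nat.cast_pow, hcast] at this
  have hdivx : (d : ℝ) / x ≤ 1 := by rw [div_le_one hx0]; exact hdx
  have hbern : 1 - (d : ℝ) * ((d : ℝ) / x) ≤ (1 - (d : ℝ) / x) ^ d := by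
    have := one_add_mul_le_pow (a := -((d : ℝ) / x)) (by linarith) d
    have heq : (1 : ℝ) + (d : ℝ) * (-((d : ℝ) / x)) = 1 - (d : ℝ) * ((d : ℝ) / x) := by ring
    have heq2 : (1 : ℝ) + -((d : ℝ) / x) = 1 - (d : ℝ) / x := by ring
    rw [heq, heq2] at this
    exact this
  have hd2xε : (d : ℝ) * ((d : ℝ) / x) ≤ ε := by
    rw [← mul_div_assoc, div_le_iff₀ hx0]
    have : (d : ℝ) ^ 2 ≤ ε * x := by
      rw [← div_le_iff₀' hε] at *
      nlinarith [hj]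
    nlinarith [this]
  have h3 : (1 - ε) * x ^ d ≤ (x - (d : ℝ)) ^ d := by
    have hxpow : (0 : ℝ) ≤ x ^ d := by positivity
    have hstep : (1 - ε) ≤ (1 - (d : ℝ) / x) ^ d := le_trans (by linarith) hbern
    have := mul_le_mul_of_nonneg_right hstep hxpow
    have heq : (1 - (d : ℝ) / x) ^ d * x ^ d = (x - (d : ℝ)) ^ d := by
      rw [← mul_pow]
      congr 1
      field_simp
    linarith [this, heq ▸ this]
  linarith

/-- Upper bound for the polynomial `1 + ∑ β_k descFactorial(j, k-1)`. -/
lemma aux_poly_upper (d n : ℕ) (hd : 1 ≤ d) (hn : n ≤ d + 1) (beta : ℕ → ℝ)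
    (hbeta : ∀ k, 0 ≤ beta k) (top : ℝ) (htop0 : 0 ≤ top)
    (htop : ∀ k ∈ Finset.Icc 2 n, k = d + 1 → beta k ≤ top) (j : ℕ) :
    1 + ∑ k ∈ Finset.Icc 2 n, beta k * (j.descFactorial (k - 1) : ℝ) ≤
      top * ((j : ℝ) + 1) ^ d + (1 + ∑ k ∈ Finset.Icc 2 n, beta k) * ((j : ℝ) + 1) ^ (d - 1) := by
  set y : ℝ := (j : ℝ) + 1 with hy_def
  have hj0 : (0 : ℝ) ≤ (j : ℝ) := Nat.cast_nonneg j
  have hy1 : (1 : ℝ) ≤ y := by rw [hy_def]; linarith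
  have hy0 : (0 : ℝ) ≤ y := by linarith
  have hyd1 : (1 : ℝ) ≤ y ^ (d - 1) := one_le_pow₀ hy1
  have hdesc : ∀ m : ℕ, (j.descFactorial m : ℝ) ≤ y ^ m := by
    intro m
    calc (j.descFactorial m : ℝ) ≤ ((j : ℝ)) ^ m := by
          exact_mod_cast Nat.descFactorial_le_pow j m
      _ ≤ y ^ m := pow_le_pow_left₀ hj0 (by rw [hy_def]; linarith) m
  by_cases hmem : d + 1 ∈ Finset.Icc 2 n
  · have hsplit : ∑ k ∈ Finset.Icc 2 n, beta k * (j.descFactorial (k - 1) : ℝ) =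
        beta (d + 1) * (j.descFactorial ((d + 1) - 1) : ℝ) +
        ∑ k ∈ (Finset.Icc 2 n).erase (d + 1), beta k * (j.descFactorial (k - 1) : ℝ) :=
      (Finset.add_sum_erase _ _ hmem).symm
    have htopterm : beta (d + 1) * (j.descFactorial ((d + 1) - 1) : ℝ) ≤ top * y ^ d := by
      simp only [Nat.add_sub_cancel]
      exact mul_le_mul (htop (d + 1) hmem rfl) (hdesc d) (Nat.cast_nonneg _) htop0
    have hrest : ∀ k ∈ (Finset.Icc 2 n).erase (d + 1),
        beta k * (j.descFactorial (k - 1) : ℝ) ≤ beta k * y ^ (d - 1) := by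
      intro k hk
      have hk1 : k ≠ d + 1 := (Finset.mem_erase.mp hk).1
      have hk2 := Finset.mem_Icc.mp (Finset.mem_erase.mp hk).2
      have hkd : k - 1 ≤ d - 1 := by omega
      exact mul_le_mul_of_nonneg_left
        ((hdesc (k - 1)).trans (pow_le_pow_right₀ hy1 hkd)) (hbeta k)
    have hsum_le : ∑ k ∈ (Finset.Icc 2 n).erase (d + 1),
        beta k * (j.descFactorial (k - 1) : ℝ) ≤
        (∑ k ∈ (Finset.Icc 2 n).erase (d + 1), beta k) * y ^ (d - 1) := by
      rw [Finset.sum_mul]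
      exact Finset.sum_le_sum hrest
    have hsub : ∑ k ∈ (Finset.Icc 2 n).erase (d + 1), beta k ≤
        ∑ k ∈ Finset.Icc 2 n, beta k :=
      Finset.sum_le_sum_of_subset_of_nonneg (Finset.erase_subset _ _)
        (fun i _ _ => hbeta i)
    have hydpos : (0 : ℝ) ≤ y ^ (d - 1) := by positivity
    have := mul_le_mul_of_nonneg_right hsub hydpos
    rw [hsplit]
    nlinarith [htopterm, hsum_le, hyd1, this]
  · have hall : ∀ k ∈ Finset.Icc 2 n,
        beta k * (j.descFactorial (k - 1) : ℝ) ≤ beta k * y ^ (d - 1) := by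
      intro k hk
      have hk2 := Finset.mem_Icc.mp hk
      have hk1 : k ≠ d + 1 := fun h => hmem (h ▸ hk)
      have hkd : k - 1 ≤ d - 1 := by omega
      exact mul_le_mul_of_nonneg_left
        ((hdesc (k - 1)).trans (pow_le_pow_right₀ hy1 hkd)) (hbeta k)
    have hsum_le : ∑ k ∈ Finset.Icc 2 n, beta k * (j.descFactorial (k - 1) : ℝ) ≤
        (∑ k ∈ Finset.Icc 2 n, beta k) * y ^ (d - 1) := by
      rw [Finset.sum_mul]
      exact Finset.sum_le_sum hall
    have htoppos : (0 : ℝ) ≤ top * y ^ d := by positivity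
    nlinarith [hsum_le, hyd1]


set_option maxHeartbeats 1000000 in
/-- The key cross-term bound: `f u * f v ≤ (8/(3β)/M) * f M` for `u + v = M`. -/
lemma aux_T (a : ℕ → ℝ) (β : ℝ) (hβpos : 0 < β) (d J₃ : ℕ) (hd2 : 2 ≤ d)
    (ha_pos : ∀ j, 0 < a j) (ha0 : a 0 = 1)
    (ha_mono : ∀ i j : ℕ, i ≤ j → a i ≤ a j)
    (hup3 : ∀ j : ℕ, J₃ ≤ j → a j ≤ 4 / 3 * β * ((j : ℝ) + 1) ^ d)
    (hlow3 : ∀ j : ℕ, J₃ ≤ j → 3 / 4 * β * ((j : ℝ) + 1) ^ d ≤ a j)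
    (lam : ℝ) (hlam : 0 < lam)
    (f : ℕ → ℝ) (hf : ∀ m, f m = lam ^ m / m.factorial * ∏ j ∈ Finset.range m, a j)
    (u v M : ℕ) (hMeq : u + v = M) (hu : 1 ≤ u) (huv : u ≤ v)
    (hMJ : 2 * J₃ ≤ M) (hMc : ⌈16 * a J₃ / (3 * β)⌉₊ ≤ M) :
    f u * f v ≤ 8 / (3 * β) / (M : ℝ) * f M := by
  have hfacne : ∀ m : ℕ, ((m.factorial : ℕ) : ℝ) ≠ 0 :=
    fun m => Nat.cast_ne_zero.mpr (Nat.factorial_ne_zero m)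
  have hvJ₃ : J₃ ≤ v := by omega
  have hM1 : 1 ≤ M := by omega
  have hMR : (0 : ℝ) < (M : ℝ) := by exact_mod_cast hM1
  have hMv : (M : ℝ) ≤ 2 * ((v : ℝ) + 1) := by
    have h1 : M ≤ 2 * (v + 1) := by omega
    have h2 : (M : ℝ) ≤ ((2 * (v + 1) : ℕ) : ℝ) := by exact_mod_cast h1
    push_cast at h2
    linarith
  -- termwise claim
  have hclaim : ∀ j ∈ Finset.range u,
      ((v + 1 + j : ℕ) : ℝ) * a j ≤
        (if j = 0 then 8 / (3 * β) / (M : ℝ) else 1) * (((j + 1 : ℕ) : ℝ) * a (v + j)) := by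
    intro j hjmem
    simp only [Finset.mem_range] at hjmem
    by_cases hj0 : j = 0
    · subst hj0
      rw [if_pos rfl]
      have hav := hlow3 v hvJ₃
      have hv1 : (1 : ℝ) ≤ (v : ℝ) + 1 := by
        have := Nat.cast_nonneg (α := ℝ) v; linarith
      have hp2 : ((v : ℝ) + 1) ^ 2 ≤ ((v : ℝ) + 1) ^ d := pow_le_pow_right₀ hv1 hd2
      have hgoal : ((v : ℝ) + 1) * ((M : ℝ) * (3 * β)) ≤ 8 * a v := by
        have hint1 := mul_le_mul_of_nonneg_left hMv
          (by positivity : (0 : ℝ) ≤ 3 * β * ((v : ℝ) + 1))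
        have hint2 := mul_le_mul_of_nonneg_left hp2 hβpos.le
        have hq' : β * (((v : ℝ) + 1) * ((v : ℝ) + 1)) = β * ((v : ℝ) + 1) ^ 2 := by
          ring
        linarith [hav, hint1, hint2, hq']
      simp only [Nat.add_zero, Nat.zero_add, ha0, Nat.cast_one, one_mul, mul_one]
      have h8 : 8 / (3 * β) / (M : ℝ) * a v = 8 * a v / ((M : ℝ) * (3 * β)) := by
        rw [div_div, div_mul_eq_mul_div, mul_comm (3 * β) ((M : ℝ))]
      rw [h8, le_div_iff₀ (by positivity)]
      push_cast
      linarith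
    · rw [if_neg hj0, one_mul]
      by_cases hjJ : j < J₃
      · have h1 : ((v + 1 + j : ℕ) : ℝ) ≤ (M : ℝ) := by
          exact_mod_cast (by omega : v + 1 + j ≤ M)
        have h2 : a j ≤ a J₃ := ha_mono j J₃ (le_of_lt hjJ)
        have h3 := hlow3 (v + j) (by omega)
        have hv1 : (1 : ℝ) ≤ (v : ℝ) + 1 := by
          have := Nat.cast_nonneg (α := ℝ) v; linarith
        have h4 : ((v : ℝ) + 1) ^ d ≤ (((v + j : ℕ) : ℝ) + 1) ^ d := by
          refine pow_le_pow_left₀ (by linarith) ?_ d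
          push_cast
          have := Nat.cast_nonneg (α := ℝ) j
          linarith
        have h5 : ((v : ℝ) + 1) ^ 2 ≤ ((v : ℝ) + 1) ^ d := pow_le_pow_right₀ hv1 hd2
        have h8 : 16 * a J₃ / (3 * β) ≤ (⌈16 * a J₃ / (3 * β)⌉₊ : ℝ) := Nat.le_ceil _
        have h9 : ((⌈16 * a J₃ / (3 * β)⌉₊ : ℕ) : ℝ) ≤ (M : ℝ) := by
          exact_mod_cast hMc
        have h7 : 16 * a J₃ ≤ 3 * β * (M : ℝ) := by
          rw [div_le_iff₀ (by positivity)] at h8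
          linarith [h8, mul_le_mul_of_nonneg_right h9 (by positivity : (0 : ℝ) ≤ 3 * β)]
        have hj1R : (1 : ℝ) ≤ ((j + 1 : ℕ) : ℝ) := by
          exact_mod_cast (by omega : 1 ≤ j + 1)
        have s1 : (M : ℝ) * a J₃ ≤ 3 * β * (M : ℝ) * (M : ℝ) / 16 := by
          linarith [mul_le_mul_of_nonneg_left h7 hMR.le]
        have s2 : 3 * β * (M : ℝ) * (M : ℝ) / 16 ≤ (3 / 4) * β * ((v : ℝ) + 1) ^ 2 := by
          linarith [mul_le_mul_of_nonneg_left
            (mul_self_le_mul_self hMR.le hMv) hβpos.le]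
        have s3 : (3 / 4) * β * ((v : ℝ) + 1) ^ 2 ≤
            (3 / 4) * β * (((v + j : ℕ) : ℝ) + 1) ^ d :=
          mul_le_mul_of_nonneg_left (h5.trans h4) (by positivity)
        have s4 : a (v + j) ≤ ((j + 1 : ℕ) : ℝ) * a (v + j) := by
          nlinarith [hj1R, ha_pos (v + j)]
        have s0 : ((v + 1 + j : ℕ) : ℝ) * a j ≤ (M : ℝ) * a J₃ :=
          mul_le_mul h1 h2 (ha_pos j).le hMR.le
        linarith
      · push_neg at hjJ
        have hupj := hup3 j hjJ
        have hlowvj := hlow3 (v + j) (by omega)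
        have hj1v : (j : ℝ) + 1 ≤ (v : ℝ) := by
          have h1 : ((j + 1 : ℕ) : ℝ) ≤ (v : ℝ) := by
            exact_mod_cast (by omega : j + 1 ≤ v)
          push_cast at h1
          linarith
        have hZ : 2 * ((j : ℝ) + 1) ≤ ((v + j : ℕ) : ℝ) + 1 := by
          push_cast
          linarith
        have hWpos : (0 : ℝ) < (j : ℝ) + 1 := by positivity
        have hZpos : (0 : ℝ) < ((v + j : ℕ) : ℝ) + 1 := by positivity
        have hkeypow : (16 / 9) * ((j : ℝ) + 1) ^ (d - 1) ≤
            (((v + j : ℕ) : ℝ) + 1) ^ (d - 1) := by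
          have hp := pow_le_pow_left₀ (by positivity) hZ (d - 1)
          rw [mul_pow] at hp
          have h2d : (2 : ℝ) ≤ (2 : ℝ) ^ (d - 1) := by
            calc (2 : ℝ) = 2 ^ 1 := (pow_one 2).symm
              _ ≤ 2 ^ (d - 1) := pow_le_pow_right₀ (by norm_num) (by omega)
          nlinarith [hp, pow_nonneg hWpos.le (d - 1), h2d]
        have hpowW : ((j : ℝ) + 1) ^ d = ((j : ℝ) + 1) ^ (d - 1) * ((j : ℝ) + 1) := by
          rw [← pow_succ]; congr 1; omega
        have hpowZ : (((v + j : ℕ) : ℝ) + 1) ^ d =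
            (((v + j : ℕ) : ℝ) + 1) ^ (d - 1) * (((v + j : ℕ) : ℝ) + 1) := by
          rw [← pow_succ]; congr 1; omega
        have hcastZ : ((v + 1 + j : ℕ) : ℝ) = ((v + j : ℕ) : ℝ) + 1 := by
          push_cast; ring
        have hcastW : ((j + 1 : ℕ) : ℝ) = (j : ℝ) + 1 := by push_cast; ring
        rw [hcastZ, hcastW]
        calc (((v + j : ℕ) : ℝ) + 1) * a j
            ≤ (((v + j : ℕ) : ℝ) + 1) * ((4 / 3) * β * ((j : ℝ) + 1) ^ d) :=
              mul_le_mul_of_nonneg_left hupj hZpos.le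
          _ ≤ ((j : ℝ) + 1) * ((3 / 4) * β * (((v + j : ℕ) : ℝ) + 1) ^ d) := by
              rw [hpowW, hpowZ]
              nlinarith [mul_le_mul_of_nonneg_right hkeypow
                (le_of_lt (mul_pos (mul_pos hβpos hWpos) hZpos))]
          _ ≤ ((j : ℝ) + 1) * a (v + j) :=
              mul_le_mul_of_nonneg_left hlowvj hWpos.le
  -- product inequality
  have hstar : (∏ j ∈ Finset.range u, ((v + 1 + j : ℕ) : ℝ)) *
      (∏ j ∈ Finset.range u, a j) ≤
      8 / (3 * β) / (M : ℝ) * ((u.factorial : ℝ) * ∏ j ∈ Finset.range u, a (v + j)) := by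
    have h1 : ∏ j ∈ Finset.range u, (((v + 1 + j : ℕ) : ℝ) * a j) ≤
        ∏ j ∈ Finset.range u,
          ((if j = 0 then 8 / (3 * β) / (M : ℝ) else 1) * (((j + 1 : ℕ) : ℝ) * a (v + j))) :=
      Finset.prod_le_prod (fun j _ => mul_nonneg (Nat.cast_nonneg _) (ha_pos j).le) hclaim
    simp only [Finset.prod_mul_distrib] at h1
    have h2 : ∏ j ∈ Finset.range u, (if j = 0 then 8 / (3 * β) / (M : ℝ) else 1) =
        8 / (3 * β) / (M : ℝ) := by
      rw [Finset.prod_eq_single 0]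
      · simp
      · intro bb _ hbne; simp [hbne]
      · intro h0
        exact absurd (Finset.mem_range.mpr (by omega : 0 < u)) h0
    have h3 : ∏ j ∈ Finset.range u, ((j + 1 : ℕ) : ℝ) = (u.factorial : ℝ) := by
      rw [← Nat.cast_prod]
      exact_mod_cast congrArg (Nat.cast (R := ℝ)) (Finset.prod_range_add_one_eq_factorial u)
    rw [h2, h3] at h1
    exact h1
  -- convert to f inequality
  have hXeq : (v.factorial : ℝ) * ∏ j ∈ Finset.range u, ((v + 1 + j : ℕ) : ℝ) =
      (M.factorial : ℝ) := by
    rw [← Nat.cast_prod, ← Nat.cast_mul, aux_fact_prod v u]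
    have huv2 : v + u = M := by omega
    rw [huv2]
  have hPN : ∏ j ∈ Finset.range M, a j =
      (∏ j ∈ Finset.range v, a j) * ∏ j ∈ Finset.range u, a (v + j) := by
    rw [← hMeq, Nat.add_comm u v, Finset.prod_range_add]
  rw [hf u, hf v, hf M, hPN]
  have hXpos : (0 : ℝ) < ∏ j ∈ Finset.range u, ((v + 1 + j : ℕ) : ℝ) :=
    Finset.prod_pos fun j _ => by positivity
  have hlamM : lam ^ M = lam ^ u * lam ^ v := by rw [← pow_add, hMeq]
  have hNfaceq : (M.factorial : ℝ) =
      (v.factorial : ℝ) * ∏ j ∈ Finset.range u, ((v + 1 + j : ℕ) : ℝ) := hXeq.symm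
  have hPv : (0 : ℝ) < ∏ j ∈ Finset.range v, a j :=
    Finset.prod_pos fun j _ => ha_pos j
  have hu0 : (0 : ℝ) < (u.factorial : ℝ) := by exact_mod_cast Nat.factorial_pos u
  have hv0 : (0 : ℝ) < (v.factorial : ℝ) := by exact_mod_cast Nat.factorial_pos v
  have h3βne : (3 * β) ≠ 0 := by positivity
  have hMne : (M : ℝ) ≠ 0 := hMR.ne'
  have hXne : (∏ j ∈ Finset.range u, ((v + 1 + j : ℕ) : ℝ)) ≠ 0 := hXpos.ne'
  have hu0' : ((u.factorial : ℕ) : ℝ) ≠ 0 := hu0.ne'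
  have hv0' : ((v.factorial : ℕ) : ℝ) ≠ 0 := hv0.ne'
  have hkey := mul_le_mul_of_nonneg_right hstar
    (le_of_lt (div_pos (mul_pos (mul_pos (pow_pos hlam u) (pow_pos hlam v)) hPv)
      (mul_pos (mul_pos hu0 hv0) hXpos)))
  have hlhs : (∏ j ∈ Finset.range u, ((v + 1 + j : ℕ) : ℝ)) *
      (∏ j ∈ Finset.range u, a j) *
      (lam ^ u * lam ^ v * (∏ j ∈ Finset.range v, a j) /
        ((u.factorial : ℝ) * (v.factorial : ℝ) *
          ∏ j ∈ Finset.range u, ((v + 1 + j : ℕ) : ℝ))) =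
      lam ^ u / (u.factorial : ℝ) * (∏ j ∈ Finset.range u, a j) *
        (lam ^ v / (v.factorial : ℝ) * ∏ j ∈ Finset.range v, a j) := by
    field_simp
  have hrhs : 8 / (3 * β) / (M : ℝ) *
      ((u.factorial : ℝ) * ∏ j ∈ Finset.range u, a (v + j)) *
      (lam ^ u * lam ^ v * (∏ j ∈ Finset.range v, a j) /
        ((u.factorial : ℝ) * (v.factorial : ℝ) *
          ∏ j ∈ Finset.range u, ((v + 1 + j : ℕ) : ℝ))) =
      8 / (3 * β) / (M : ℝ) * (lam ^ M / (M.factorial : ℝ) *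
        ((∏ j ∈ Finset.range v, a j) * ∏ j ∈ Finset.range u, a (v + j))) := by
    rw [hlamM, hNfaceq]
    field_simp
  rw [hlhs, hrhs] at hkey
  exact hkey

/-- Comparison by a geometric factor via ratio recurrences. -/
lemma aux_comp (g₁ g₂ : ℕ → ℝ) (ρ : ℝ) (hρ : 0 < ρ)
    (h₁pos : ∀ m, 0 < g₁ m) (h₂pos : ∀ m, 0 < g₂ m)
    (JB : ℕ) (r₁ r₂ : ℕ → ℝ)
    (hrec₁ : ∀ m, g₁ (m + 1) = g₁ m * r₁ m) (hrec₂ : ∀ m, g₂ (m + 1) = g₂ m * r₂ m)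
    (hr₂nonneg : ∀ m, 0 ≤ r₂ m)
    (hkey : ∀ m, JB ≤ m → r₂ m ≤ ρ * r₁ m) :
    ∃ C : ℝ, 0 < C ∧ ∀ m, g₂ m ≤ C * ρ ^ m * g₁ m := by
  set C := ∑ i ∈ Finset.range (JB + 1), g₂ i / (ρ ^ i * g₁ i) with hC_def
  have hCge : ∀ m, m ≤ JB → g₂ m ≤ C * ρ ^ m * g₁ m := by
    intro m hm
    have hmem : m ∈ Finset.range (JB + 1) := Finset.mem_range.mpr (by omega)
    have h1 : g₂ m / (ρ ^ m * g₁ m) ≤ C :=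
      Finset.single_le_sum (f := fun i => g₂ i / (ρ ^ i * g₁ i))
        (fun i _ => div_nonneg (h₂pos i).le (mul_pos (pow_pos hρ i) (h₁pos i)).le) hmem
    have h2 : (0 : ℝ) < ρ ^ m * g₁ m := mul_pos (pow_pos hρ m) (h₁pos m)
    calc g₂ m = g₂ m / (ρ ^ m * g₁ m) * (ρ ^ m * g₁ m) := by rw [div_mul_cancel₀ _ h2.ne']
      _ ≤ C * (ρ ^ m * g₁ m) := mul_le_mul_of_nonneg_right h1 h2.le
      _ = C * ρ ^ m * g₁ m := by ring
  have hCpos : 0 < C := by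
    have h0 : (0 : ℝ) < g₂ 0 / (ρ ^ 0 * g₁ 0) :=
      div_pos (h₂pos 0) (mul_pos (pow_pos hρ 0) (h₁pos 0))
    have h1 : g₂ 0 / (ρ ^ 0 * g₁ 0) ≤ C :=
      Finset.single_le_sum (f := fun i => g₂ i / (ρ ^ i * g₁ i))
        (fun i _ => div_nonneg (h₂pos i).le (mul_pos (pow_pos hρ i) (h₁pos i)).le)
        (Finset.mem_range.mpr (by omega))
    linarith
  clear_value C
  refine ⟨C, hCpos, fun m => ?_⟩
  induction m with
  | zero => exact hCge 0 (Nat.zero_le _)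
  | succ m ih =>
    by_cases hm : JB ≤ m
    · calc g₂ (m + 1) = g₂ m * r₂ m := hrec₂ m
        _ ≤ C * ρ ^ m * g₁ m * (ρ * r₁ m) := by
            apply mul_le_mul ih (hkey m hm) (hr₂nonneg m)
            exact mul_nonneg (mul_nonneg hCpos.le (pow_pos hρ m).le) (h₁pos m).le
        _ = C * ρ ^ (m + 1) * (g₁ m * r₁ m) := by rw [pow_succ]; ring
        _ = C * ρ ^ (m + 1) * g₁ (m + 1) := by rw [← hrec₁ m]
    · exact hCge (m + 1) (by omega)


set_option maxHeartbeats 1000000 in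
/-- Two-sided eventual bounds with constants 4/3 and 3/4. -/
lemma aux_up3low3 (a : ℕ → ℝ) (β A' : ℝ) (d : ℕ) (hd1 : 1 ≤ d) (hβpos : 0 < β)
    (h_up : ∀ j : ℕ, a j ≤ β * ((j : ℝ) + 1) ^ d + A' * ((j : ℝ) + 1) ^ (d - 1))
    (h_low : ∀ ε : ℝ, 0 < ε → ε ≤ 1 → ∀ j : ℕ, (d : ℝ) ^ 2 / ε ≤ (j : ℝ) + 1 →
      (1 - ε) * (β * ((j : ℝ) + 1) ^ d) ≤ a j) :
    ∃ J₃ : ℕ, (∀ j : ℕ, J₃ ≤ j → a j ≤ 4 / 3 * β * ((j : ℝ) + 1) ^ d) ∧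
      (∀ j : ℕ, J₃ ≤ j → 3 / 4 * β * ((j : ℝ) + 1) ^ d ≤ a j) := by
  refine ⟨4 * d ^ 2 + ⌈3 * A' / β⌉₊ + 1, fun j hj => ?_, fun j hj => ?_⟩
  · have h1 := h_up j
    have h3 : 3 * A' / β ≤ (⌈3 * A' / β⌉₊ : ℝ) := Nat.le_ceil _
    have h4 : ((⌈3 * A' / β⌉₊ : ℕ) : ℝ) ≤ (j : ℝ) := by
      exact_mod_cast (by omega : ⌈3 * A' / β⌉₊ ≤ j)
    have h2 : 3 * A' ≤ β * ((j : ℝ) + 1) := by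
      rw [div_le_iff₀ hβpos] at h3
      nlinarith [hβpos]
    have hxpow : ((j : ℝ) + 1) ^ d = ((j : ℝ) + 1) ^ (d - 1) * ((j : ℝ) + 1) := by
      rw [← pow_succ]; congr 1; omega
    have hxd1 : (0 : ℝ) ≤ ((j : ℝ) + 1) ^ (d - 1) := by positivity
    have hA : A' * ((j : ℝ) + 1) ^ (d - 1) ≤ 1 / 3 * β * ((j : ℝ) + 1) ^ d := by
      have h5 := mul_le_mul_of_nonneg_right h2 hxd1
      rw [hxpow]
      linarith [h5]
    linarith [h1, hA]
  · have h0 : ((4 * d ^ 2 : ℕ) : ℝ) ≤ (j : ℝ) := by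
      exact_mod_cast (by omega : 4 * d ^ 2 ≤ j)
    have h1 : (d : ℝ) ^ 2 / (1 / 4 : ℝ) ≤ (j : ℝ) + 1 := by
      push_cast at h0
      rw [div_div_eq_mul_div, div_one]
      linarith
    have h2 := h_low (1 / 4) (by norm_num) (by norm_num) j h1
    linarith [h2]

set_option maxHeartbeats 1000000 in
/-- Eventual geometric domination of `lam₂ * b` by `lam₁ * a`. -/
lemma aux_keyB (a b : ℕ → ℝ) (β β₂' B' lam₁ lam₂ : ℝ) (d : ℕ) (hd1 : 1 ≤ d)
    (hlam₁ : 0 < lam₁) (hlam₂ : 0 < lam₂) (hβpos : 0 < β) (hβ₂'0 : 0 ≤ β₂')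
    (hdom : lam₂ * β₂' < lam₁ * β)
    (h_upb : ∀ j : ℕ, b j ≤ β₂' * ((j : ℝ) + 1) ^ d + B' * ((j : ℝ) + 1) ^ (d - 1))
    (h_low : ∀ ε : ℝ, 0 < ε → ε ≤ 1 → ∀ j : ℕ, (d : ℝ) ^ 2 / ε ≤ (j : ℝ) + 1 →
      (1 - ε) * (β * ((j : ℝ) + 1) ^ d) ≤ a j) :
    ∃ ρ : ℝ, 0 < ρ ∧ ρ < 1 ∧ ∃ JB : ℕ, ∀ j : ℕ, JB ≤ j →
      lam₂ * b j ≤ ρ * (lam₁ * a j) := by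
  set δ := lam₁ * β - lam₂ * β₂' with hδ_def
  clear_value δ
  have hδpos : 0 < δ := by rw [hδ_def]; linarith [hdom]
  have hδle : δ ≤ lam₁ * β := by
    have h0 : 0 ≤ lam₂ * β₂' := mul_nonneg hlam₂.le hβ₂'0
    rw [hδ_def]; linarith
  have hlamβ : 0 < lam₁ * β := mul_pos hlam₁ hβpos
  set ε := δ / (4 * (lam₁ * β)) with hε_def
  have hεpos : 0 < ε := by rw [hε_def]; positivity
  clear_value ε
  have hεle : ε ≤ 1 / 4 := by
    rw [hε_def, div_le_iff₀ (by positivity)]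
    linarith
  have hδε : δ = 4 * ε * (lam₁ * β) := by
    rw [hε_def]
    field_simp
  refine ⟨1 - ε, by linarith, by linarith, ⌈(d : ℝ) ^ 2 / ε⌉₊ + ⌈2 * lam₂ * B' / δ⌉₊,
    fun j hj => ?_⟩
  have hj1 : (d : ℝ) ^ 2 / ε ≤ (j : ℝ) + 1 := by
    have h1 : (d : ℝ) ^ 2 / ε ≤ (⌈(d : ℝ) ^ 2 / ε⌉₊ : ℝ) := Nat.le_ceil _
    have h2 : ((⌈(d : ℝ) ^ 2 / ε⌉₊ : ℕ) : ℝ) ≤ (j : ℝ) := by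
      exact_mod_cast (by omega : ⌈(d : ℝ) ^ 2 / ε⌉₊ ≤ j)
    linarith
  have hj2 : 2 * lam₂ * B' ≤ δ * ((j : ℝ) + 1) := by
    have h1 : 2 * lam₂ * B' / δ ≤ (⌈2 * lam₂ * B' / δ⌉₊ : ℝ) := Nat.le_ceil _
    have h2 : ((⌈2 * lam₂ * B' / δ⌉₊ : ℕ) : ℝ) ≤ (j : ℝ) := by
      exact_mod_cast (by omega : ⌈2 * lam₂ * B' / δ⌉₊ ≤ j)
    rw [div_le_iff₀ hδpos] at h1
    nlinarith [hδpos]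
  have hlowa := h_low ε hεpos (by linarith) j hj1
  have hupb := h_upb j
  set x := (j : ℝ) + 1 with hx_def
  have hx0 : (0 : ℝ) < x := by rw [hx_def]; positivity
  clear_value x
  have hxd : (0 : ℝ) ≤ x ^ d := pow_nonneg hx0.le d
  have hxd1 : (0 : ℝ) ≤ x ^ (d - 1) := pow_nonneg hx0.le (d - 1)
  have hxpow : x ^ d = x ^ (d - 1) * x := by rw [← pow_succ]; congr 1; omega
  have hstep1 : lam₂ * B' * x ^ (d - 1) ≤ δ / 2 * x ^ d := by
    rw [hxpow]
    linarith [mul_le_mul_of_nonneg_left hj2 hxd1]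
  have hstep2 : lam₂ * b j ≤ lam₂ * β₂' * x ^ d + lam₂ * B' * x ^ (d - 1) := by
    linarith [mul_le_mul_of_nonneg_left hupb hlam₂.le]
  have h2' : lam₁ * ((1 - ε) * (β * x ^ d)) ≤ lam₁ * a j :=
    mul_le_mul_of_nonneg_left hlowa hlam₁.le
  have hstep3 : (1 - ε) * (lam₁ * ((1 - ε) * (β * x ^ d))) ≤ (1 - ε) * (lam₁ * a j) :=
    mul_le_mul_of_nonneg_left h2' (by linarith)
  have hsc : lam₂ * β₂' + δ / 2 ≤ (1 - ε) * (1 - ε) * (lam₁ * β) := by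
    have hnn : 0 ≤ ε * ε * (lam₁ * β) :=
      mul_nonneg (mul_nonneg hεpos.le hεpos.le) hlamβ.le
    nlinarith [hδε, hδ_def, hnn]
  have hstep4 : lam₂ * β₂' * x ^ d + δ / 2 * x ^ d ≤
      (1 - ε) * (lam₁ * ((1 - ε) * (β * x ^ d))) := by
    have h6 := mul_le_mul_of_nonneg_right hsc hxd
    nlinarith [h6]
  linarith [hstep1, hstep2, hstep3, hstep4]

set_option maxHeartbeats 1000000 in
/-- Final assembly: squeeze the normalized cross sum to zero. -/
lemma aux_assemble (f₁ f₂ : ℕ → ℝ) (hf₁pos : ∀ m, 0 < f₁ m) (hf₂pos : ∀ m, 0 < f₂ m)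
    (C c ρ : ℝ) (hCpos : 0 < C) (hcpos : 0 < c) (hρpos : 0 < ρ) (hρlt : ρ < 1) (N₁ : ℕ)
    (hcomp : ∀ m, f₂ m ≤ C * ρ ^ m * f₁ m)
    (hT : ∀ i N : ℕ, N₁ ≤ N → 1 ≤ i → i < N → f₁ i * f₁ (N - i) ≤ c / (N : ℝ) * f₁ N) :
    Tendsto (fun N => (∑ i ∈ Finset.Ico 1 N, f₁ i * f₂ (N - i)) / f₁ N)
      atTop (nhds 0) := by
  have h1ρ : 0 < 1 - ρ := by linarith
  refine squeeze_zero' ?_ ?_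
    (tendsto_const_div_atTop_nhds_zero_nat (C * c * (1 / (1 - ρ))))
  · filter_upwards with N
    exact div_nonneg
      (Finset.sum_nonneg fun i _ => mul_nonneg (hf₁pos i).le (hf₂pos _).le)
      (hf₁pos N).le
  · filter_upwards [eventually_ge_atTop (N₁ + 1)] with N hN
    have hN1 : 1 ≤ N := by omega
    have hNR : (0 : ℝ) < (N : ℝ) := by exact_mod_cast hN1
    have hterm : ∀ i ∈ Finset.Ico 1 N, f₁ i * f₂ (N - i) ≤
        C * ρ ^ (N - i) * (c / (N : ℝ) * f₁ N) := by
      intro i hi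
      rw [Finset.mem_Ico] at hi
      have h2 := hcomp (N - i)
      have h3 : f₁ i * f₁ (N - i) ≤ c / (N : ℝ) * f₁ N :=
        hT i N (by omega) hi.1 hi.2
      calc f₁ i * f₂ (N - i) ≤ f₁ i * (C * ρ ^ (N - i) * f₁ (N - i)) :=
            mul_le_mul_of_nonneg_left h2 (hf₁pos i).le
        _ = C * ρ ^ (N - i) * (f₁ i * f₁ (N - i)) := by ring
        _ ≤ C * ρ ^ (N - i) * (c / (N : ℝ) * f₁ N) := by
            apply mul_le_mul_of_nonneg_left h3
            exact mul_nonneg hCpos.le (pow_nonneg hρpos.le _)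
    have hgeom : ∑ i ∈ Finset.Ico 1 N, ρ ^ (N - i) ≤ 1 / (1 - ρ) := by
      have h1 : ∑ i ∈ Finset.Ico 1 N, ρ ^ (N - i) = ∑ i ∈ Finset.Ico 1 N, ρ ^ i := by
        have h2 := Finset.sum_Ico_reflect (fun k => ρ ^ k) 1 (show N ≤ N + 1 by omega)
        have h3 : N + 1 - N = 1 := by omega
        have h4 : N + 1 - 1 = N := by omega
        rw [h3, h4] at h2
        exact h2
      rw [h1]
      have h2 : ∑ i ∈ Finset.Ico 1 N, ρ ^ i ≤ ∑ i ∈ Finset.range N, ρ ^ i :=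
        Finset.sum_le_sum_of_subset_of_nonneg
          (fun x hx => by rw [Finset.mem_Ico] at hx; exact Finset.mem_range.mpr hx.2)
          (fun i _ _ => by positivity)
      have h3 : ∑ i ∈ Finset.range N, ρ ^ i = (1 - ρ ^ N) / (1 - ρ) := by
        rw [geom_sum_eq (ne_of_lt hρlt)]
        rw [div_eq_div_iff (by linarith) (by linarith)]
        ring
      have h4 : (1 - ρ ^ N) / (1 - ρ) ≤ 1 / (1 - ρ) :=
        div_le_div_of_nonneg_right (by nlinarith [pow_nonneg hρpos.le N]) h1ρ.le
      linarith
    have hsum : ∑ i ∈ Finset.Ico 1 N, f₁ i * f₂ (N - i) ≤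
        C * (c / (N : ℝ) * f₁ N) * ∑ i ∈ Finset.Ico 1 N, ρ ^ (N - i) := by
      calc ∑ i ∈ Finset.Ico 1 N, f₁ i * f₂ (N - i)
          ≤ ∑ i ∈ Finset.Ico 1 N, C * ρ ^ (N - i) * (c / (N : ℝ) * f₁ N) :=
            Finset.sum_le_sum hterm
        _ = C * (c / (N : ℝ) * f₁ N) * ∑ i ∈ Finset.Ico 1 N, ρ ^ (N - i) := by
            rw [Finset.mul_sum]
            exact Finset.sum_congr rfl fun i _ => by ring
    have hNne : (N : ℝ) ≠ 0 := hNR.ne'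
    have h1ρne : (1 - ρ) ≠ 0 := h1ρ.ne'
    have hfinal : ∑ i ∈ Finset.Ico 1 N, f₁ i * f₂ (N - i) ≤
        C * c * (1 / (1 - ρ)) / (N : ℝ) * f₁ N := by
      have hpos2 : (0 : ℝ) ≤ C * (c / (N : ℝ) * f₁ N) := by
        have h5 := (hf₁pos N).le
        have h6 := hcpos.le
        positivity
      calc ∑ i ∈ Finset.Ico 1 N, f₁ i * f₂ (N - i)
          ≤ C * (c / (N : ℝ) * f₁ N) * ∑ i ∈ Finset.Ico 1 N, ρ ^ (N - i) :=
            hsum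
        _ ≤ C * (c / (N : ℝ) * f₁ N) * (1 / (1 - ρ)) :=
            mul_le_mul_of_nonneg_left hgeom hpos2
        _ = C * c * (1 / (1 - ρ)) / (N : ℝ) * f₁ N := by
            field_simp
    rw [div_le_div_iff₀ (hf₁pos N) hNR]
    calc (∑ i ∈ Finset.Ico 1 N, f₁ i * f₂ (N - i)) * (N : ℝ)
        ≤ C * c * (1 / (1 - ρ)) / (N : ℝ) * f₁ N * (N : ℝ) :=
          mul_le_mul_of_nonneg_right hfinal hNR.le
      _ = C * c * (1 / (1 - ρ)) * f₁ N := by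
          field_simp

set_option maxHeartbeats 1000000 in
theorem cross_sum_little_o (n₁ n₂ : ℕ) (hn₁ : 3 ≤ n₁) (hn₂ : n₂ ≤ n₁)
    (lam₁ lam₂ : ℝ) (hlam₁ : 0 < lam₁) (hlam₂ : 0 < lam₂)
    (beta₁ beta₂ : ℕ → ℝ) (hbeta₁ : ∀ k, 0 ≤ beta₁ k) (hbeta₂ : ∀ k, 0 ≤ beta₂ k)
    (hpos : 0 < beta₁ n₁)
    (hdom : lam₂ * (if n₂ = n₁ then beta₂ n₁ else 0) < lam₁ * beta₁ n₁)
    (f₁ f₂ : ℕ → ℝ)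
    (hf₁ : ∀ m, f₁ m = lam₁ ^ m / m.factorial *
      ∏ j ∈ Finset.range m, (1 + ∑ k ∈ Finset.Icc 2 n₁,
        beta₁ k * ∏ r ∈ Finset.range (k - 1), ((j : ℝ) - r)))
    (hf₂ : ∀ m, f₂ m = lam₂ ^ m / m.factorial *
      ∏ j ∈ Finset.range m, (1 + ∑ k ∈ Finset.Icc 2 n₂,
        beta₂ k * ∏ r ∈ Finset.range (k - 1), ((j : ℝ) - r))) :
    Tendsto (fun N => (∑ i ∈ Finset.Ico 1 N, f₁ i * f₂ (N - i)) / f₁ N)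
      atTop (nhds 0) := by
  set d := n₁ - 1 with hd_def
  clear_value d
  have hd2 : 2 ≤ d := by omega
  have hd1 : 1 ≤ d := by omega
  have hn₁d : n₁ = d + 1 := by omega
  set β := beta₁ n₁ with hβ_def
  have hβpos : 0 < β := hpos
  clear_value β
  set a : ℕ → ℝ :=
    fun j => 1 + ∑ k ∈ Finset.Icc 2 n₁, beta₁ k * (j.descFactorial (k - 1) : ℝ) with ha_def
  clear_value a
  set b : ℕ → ℝ :=
    fun j => 1 + ∑ k ∈ Finset.Icc 2 n₂, beta₂ k * (j.descFactorial (k - 1) : ℝ) with hb_def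
  clear_value b
  have hf₁' : ∀ m, f₁ m = lam₁ ^ m / m.factorial * ∏ j ∈ Finset.range m, a j := by
    intro m
    rw [hf₁ m]
    congr 1
    refine Finset.prod_congr rfl fun j _ => ?_
    simp only [ha_def]
    congr 1
    exact Finset.sum_congr rfl fun k _ => by rw [aux_prod_cast]
  have hf₂' : ∀ m, f₂ m = lam₂ ^ m / m.factorial * ∏ j ∈ Finset.range m, b j := by
    intro m
    rw [hf₂ m]
    congr 1
    refine Finset.prod_congr rfl fun j _ => ?_
    simp only [hb_def]
    congr 1
    exact Finset.sum_congr rfl fun k _ => by rw [aux_prod_cast]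
  have ha_one : ∀ j, (1 : ℝ) ≤ a j := by
    intro j
    simp only [ha_def]
    have h0 : 0 ≤ ∑ k ∈ Finset.Icc 2 n₁, beta₁ k * (j.descFactorial (k - 1) : ℝ) :=
      Finset.sum_nonneg fun k _ => mul_nonneg (hbeta₁ k) (Nat.cast_nonneg _)
    linarith
  have ha_pos : ∀ j, (0 : ℝ) < a j := fun j => lt_of_lt_of_le one_pos (ha_one j)
  have hb_one : ∀ j, (1 : ℝ) ≤ b j := by
    intro j
    simp only [hb_def]
    have h0 : 0 ≤ ∑ k ∈ Finset.Icc 2 n₂, beta₂ k * (j.descFactorial (k - 1) : ℝ) :=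
      Finset.sum_nonneg fun k _ => mul_nonneg (hbeta₂ k) (Nat.cast_nonneg _)
    linarith
  have hb_pos : ∀ j, (0 : ℝ) < b j := fun j => lt_of_lt_of_le one_pos (hb_one j)
  have ha_mono : ∀ i j : ℕ, i ≤ j → a i ≤ a j := by
    intro i j hij
    simp only [ha_def]
    refine add_le_add (le_refl 1) (Finset.sum_le_sum fun k _ => ?_)
    refine mul_le_mul_of_nonneg_left ?_ (hbeta₁ k)
    exact_mod_cast Nat.descFactorial_le (k - 1) hij
  have ha0 : a 0 = 1 := by
    simp only [ha_def]
    have hz : ∀ k ∈ Finset.Icc 2 n₁,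
        beta₁ k * ((Nat.descFactorial 0 (k - 1) : ℕ) : ℝ) = 0 := by
      intro k hk
      have hk2 := (Finset.mem_Icc.mp hk).1
      have hzero : Nat.descFactorial 0 (k - 1) = 0 :=
        Nat.descFactorial_of_lt (by omega)
      rw [hzero]
      simp
    rw [Finset.sum_congr rfl hz]
    simp
  have hf₁pos : ∀ m, 0 < f₁ m := by
    intro m
    rw [hf₁' m]
    have h1 : (0 : ℝ) < lam₁ ^ m / m.factorial := by positivity
    exact mul_pos h1 (Finset.prod_pos fun j _ => ha_pos j)
  have hf₂pos : ∀ m, 0 < f₂ m := by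
    intro m
    rw [hf₂' m]
    have h1 : (0 : ℝ) < lam₂ ^ m / m.factorial := by positivity
    exact mul_pos h1 (Finset.prod_pos fun j _ => hb_pos j)
  have hfacne : ∀ m : ℕ, ((m.factorial : ℕ) : ℝ) ≠ 0 :=
    fun m => Nat.cast_ne_zero.mpr (Nat.factorial_ne_zero m)
  have hrec₁ : ∀ m : ℕ, f₁ (m + 1) = f₁ m * (lam₁ * a m / ((m : ℝ) + 1)) := by
    intro m
    rw [hf₁' (m + 1), hf₁' m, Finset.prod_range_succ, pow_succ, Nat.factorial_succ]
    have h1 : ((m : ℝ) + 1) ≠ 0 := by positivity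
    have h2 := hfacne m
    push_cast
    field_simp
  have hrec₂ : ∀ m : ℕ, f₂ (m + 1) = f₂ m * (lam₂ * b m / ((m : ℝ) + 1)) := by
    intro m
    rw [hf₂' (m + 1), hf₂' m, Finset.prod_range_succ, pow_succ, Nat.factorial_succ]
    have h1 : ((m : ℝ) + 1) ≠ 0 := by positivity
    have h2 := hfacne m
    push_cast
    field_simp
  set A' := 1 + ∑ k ∈ Finset.Icc 2 n₁, beta₁ k with hA'_def
  clear_value A'
  have h_up : ∀ j : ℕ, a j ≤ β * ((j : ℝ) + 1) ^ d + A' * ((j : ℝ) + 1) ^ (d - 1) := by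
    intro j
    simp only [ha_def, hA'_def]
    exact aux_poly_upper d n₁ hd1 (by omega) beta₁ hbeta₁ β hβpos.le
      (fun k _ hkd => by rw [hkd, ← hn₁d, hβ_def]) j
  set β₂' := if n₂ = n₁ then beta₂ n₁ else 0 with hβ₂'_def
  clear_value β₂'
  have hβ₂'0 : 0 ≤ β₂' := by
    rw [hβ₂'_def]; split_ifs; exacts [hbeta₂ n₁, le_rfl]
  set B' := 1 + ∑ k ∈ Finset.Icc 2 n₂, beta₂ k with hB'_def
  clear_value B'
  have h_upb : ∀ j : ℕ, b j ≤ β₂' * ((j : ℝ) + 1) ^ d + B' * ((j : ℝ) + 1) ^ (d - 1) := by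
    intro j
    simp only [hb_def, hB'_def]
    refine aux_poly_upper d n₂ hd1 (by omega) beta₂ hbeta₂ β₂' hβ₂'0
      (fun k hk hkd => ?_) j
    have hk2 := Finset.mem_Icc.mp hk
    have hn2 : n₂ = n₁ := by omega
    rw [hβ₂'_def, if_pos hn2, hkd, ← hn₁d]
  have h_low : ∀ ε : ℝ, 0 < ε → ε ≤ 1 → ∀ j : ℕ, (d : ℝ) ^ 2 / ε ≤ (j : ℝ) + 1 →
      (1 - ε) * (β * ((j : ℝ) + 1) ^ d) ≤ a j := by
    intro ε hε hε1 j hj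
    have hdesc := aux_desc_lower d j hd1 hε hε1 hj
    have hterm : β * (j.descFactorial d : ℝ) ≤ a j := by
      simp only [ha_def]
      have hmem : n₁ ∈ Finset.Icc 2 n₁ := Finset.mem_Icc.mpr ⟨by omega, le_rfl⟩
      have h1 : beta₁ n₁ * (j.descFactorial (n₁ - 1) : ℝ) ≤
          ∑ k ∈ Finset.Icc 2 n₁, beta₁ k * (j.descFactorial (k - 1) : ℝ) :=
        Finset.single_le_sum (f := fun k => beta₁ k * (j.descFactorial (k - 1) : ℝ))
          (fun k _ => mul_nonneg (hbeta₁ k) (Nat.cast_nonneg _)) hmem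
      rw [← hd_def] at h1
      rw [← hβ_def] at h1
      linarith
    nlinarith [mul_le_mul_of_nonneg_left hdesc hβpos.le]
  obtain ⟨J₃, hup3, hlow3⟩ := aux_up3low3 a β A' d hd1 hβpos h_up h_low
  set N₁ := 2 * J₃ + ⌈16 * a J₃ / (3 * β)⌉₊ + 4 with hN₁_def
  clear_value N₁
  have hT : ∀ i N : ℕ, N₁ ≤ N → 1 ≤ i → i < N →
      f₁ i * f₁ (N - i) ≤ 8 / (3 * β) / (N : ℝ) * f₁ N := by
    intro i N hNN hi1 hiN
    rcases le_total i (N - i) with h | h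
    · exact aux_T a β hβpos d J₃ hd2 ha_pos ha0 ha_mono hup3 hlow3 lam₁ hlam₁ f₁ hf₁'
        i (N - i) N (by omega) hi1 h (by omega) (by omega)
    · have h2 := aux_T a β hβpos d J₃ hd2 ha_pos ha0 ha_mono hup3 hlow3 lam₁ hlam₁ f₁ hf₁'
        (N - i) i N (by omega) (by omega) h (by omega) (by omega)
      linarith [h2, mul_comm (f₁ (N - i)) (f₁ i)]
  obtain ⟨ρ, hρpos, hρlt, JB, hJB⟩ :=
    aux_keyB a b β β₂' B' lam₁ lam₂ d hd1 hlam₁ hlam₂ hβpos hβ₂'0 hdom h_upb h_low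
  obtain ⟨C, hCpos, hcomp⟩ := aux_comp f₁ f₂ ρ hρpos hf₁pos hf₂pos JB
    (fun m => lam₁ * a m / ((m : ℝ) + 1)) (fun m => lam₂ * b m / ((m : ℝ) + 1))
    hrec₁ hrec₂
    (fun m => by
      have h0 := (hb_pos m).le
      positivity)
    (fun m hm => by
      have h1 := hJB m hm
      have h2 : ((m : ℝ) + 1) > 0 := by positivity
      rw [mul_div_assoc']
      exact div_le_div_of_nonneg_right h1 h2.le)
  exact aux_assemble f₁ f₂ hf₁pos hf₂pos C (8 / (3 * β)) ρ hCpos (by positivity)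
    hρpos hρlt N₁ hcomp hT
end

section
/- Let f₁ = f₂ = f be the three-molecular product-form function f(m) = (λ^m/m!)∏_{l=1}^m (1+β₂(l-1)+β₃(l-1)(l-2)) with λ > 0, β₃ > 0, β₂ ≥ 0. Then the two-species partition function Z_N = ∑_{i=0}^N f(i)f(N-i) satisfies Z_N = (2 + o(1)) f(N) as N → ∞; consequently the product-form measure π_N on {x₁+x₂=N} satisfies π_N(x₁ = N) → 1/2 and π_N(x₂ = N) → 1/2. -/
open Filter Finset

set_option maxHeartbeats 1000000 in
theorem symmetric_threemolecular_strong_condensation (lam beta2 beta3 : ℝ)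
    (hlam : 0 < lam) (hbeta2 : 0 ≤ beta2) (hbeta3 : 0 < beta3)
    (f : ℕ → ℝ)
    (hf : ∀ m, f m = lam ^ m / m.factorial *
      ∏ j ∈ Finset.range m, (1 + beta2 * (j : ℝ) + beta3 * (j : ℝ) * ((j : ℝ) - 1)))
    (Z : ℕ → ℝ)
    (hZ : ∀ N, Z N = ∑ i ∈ Finset.range (N + 1), f i * f (N - i)) :
    Tendsto (fun N => Z N / f N) atTop (nhds 2) ∧
    Tendsto (fun N => f N * f 0 / Z N) atTop (nhds (1 / 2)) ∧
    Tendsto (fun N => f 0 * f N / Z N) atTop (nhds (1 / 2)) := by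
  have hfac : ∀ j : ℕ, (1:ℝ) ≤ 1 + beta2 * j + beta3 * j * ((j:ℝ) - 1) := by
    intro j
    have hj0 : (0:ℝ) ≤ j := Nat.cast_nonneg j
    have hjj : (0:ℝ) ≤ (j:ℝ) * ((j:ℝ) - 1) := by
      rcases Nat.eq_zero_or_pos j with h | h
      · subst h; norm_num
      · have : (1:ℝ) ≤ j := by exact_mod_cast h
        nlinarith
    nlinarith [mul_nonneg hbeta2 hj0, mul_nonneg hbeta3.le hjj]
  have hfpos : ∀ m, 0 < f m := by
    intro m
    rw [hf m]
    have h1 : 0 < lam ^ m / (m.factorial : ℝ) := by positivity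
    have h2 : (0:ℝ) < ∏ j ∈ Finset.range m, (1 + beta2 * j + beta3 * j * ((j:ℝ) - 1)) :=
      Finset.prod_pos fun j _ => lt_of_lt_of_le one_pos (hfac j)
    exact mul_pos h1 h2
  have hf0 : f 0 = 1 := by rw [hf 0]; simp
  set r : ℕ → ℝ := fun m => lam * (1 + beta2 * m + beta3 * m * ((m:ℝ) - 1)) / (m + 1)
    with hrdef
  have hrpos : ∀ m, 0 < r m := by
    intro m
    have h1 : (0:ℝ) < 1 + beta2 * m + beta3 * m * ((m:ℝ) - 1) :=
      lt_of_lt_of_le one_pos (hfac m)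
    have h2 : (0:ℝ) < (m:ℝ) + 1 := by positivity
    simp only [hrdef]
    exact div_pos (mul_pos hlam h1) h2
  have hstep : ∀ m, f (m + 1) = f m * r m := by
    intro m
    have hm : ((m.factorial : ℕ):ℝ) ≠ 0 := Nat.cast_ne_zero.mpr m.factorial_ne_zero
    have hm1 : ((m:ℝ) + 1) ≠ 0 := by positivity
    simp only [hrdef]
    rw [hf (m+1), hf m, Finset.prod_range_succ, pow_succ, Nat.factorial_succ]
    push_cast
    set P := ∏ j ∈ Finset.range m, (1 + beta2 * (j:ℝ) + beta3 * (j:ℝ) * ((j:ℝ) - 1)) with hP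
    field_simp
  set d : ℝ := lam * beta3 / 2 with hddef
  have hdpos : 0 < d := by positivity
  have hlin : ∀ m : ℕ, 3 ≤ m → d * m ≤ r m := by
    intro m hm
    have hm3 : (3:ℝ) ≤ m := by exact_mod_cast hm
    have hm1 : (0:ℝ) < (m:ℝ) + 1 := by positivity
    simp only [hrdef, hddef]
    rw [le_div_iff₀ hm1]
    nlinarith [mul_nonneg (mul_nonneg hlam.le hbeta2) (by linarith : (0:ℝ) ≤ (m:ℝ)),
      mul_nonneg (mul_nonneg hlam.le hbeta3.le)
        (mul_nonneg (by linarith : (0:ℝ) ≤ (m:ℝ)) (by linarith : (0:ℝ) ≤ (m:ℝ) - 3)),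
      hlam.le]
  set M₀ : ℕ := ⌈1/beta3⌉₊ + 1 with hM₀def
  have hM₀prop : ∀ m : ℕ, M₀ ≤ m → 1 ≤ beta3 * m := by
    intro m hm
    have h1 : (1/beta3 : ℝ) ≤ (⌈(1/beta3 : ℝ)⌉₊ : ℝ) := Nat.le_ceil _
    have h2 : ((⌈(1/beta3:ℝ)⌉₊ : ℕ):ℝ) ≤ (m:ℝ) := by
      exact_mod_cast le_trans (Nat.le_succ _) hm
    have h3 : (1/beta3:ℝ) ≤ m := le_trans h1 h2
    rw [div_le_iff₀ hbeta3] at h3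
    linarith [mul_comm (m:ℝ) beta3]
  have hmono : ∀ m : ℕ, M₀ ≤ m → r m ≤ r (m + 1) := by
    intro m hm
    have h1 := hM₀prop m hm
    have hm0 : (0:ℝ) ≤ m := Nat.cast_nonneg m
    simp only [hrdef]
    rw [div_le_div_iff₀ (by positivity) (by positivity)]
    push_cast
    nlinarith [mul_nonneg hlam.le hbeta2,
      mul_nonneg (mul_nonneg hlam.le (by linarith : (0:ℝ) ≤ beta3 * m - 1))
        (by linarith : (0:ℝ) ≤ (m:ℝ) + 3), hlam.le]
  have hmono' : ∀ i j : ℕ, M₀ ≤ i → i ≤ j → r i ≤ r j := by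
    intro i j hi hij
    induction j, hij using Nat.le_induction with
    | base => exact le_rfl
    | succ n hn ih => exact le_trans ih (hmono n (le_trans hi hn))
  set B : ℝ := ∑ i ∈ Finset.range M₀, |r i| with hBdef
  have hB : ∀ i, i < M₀ → r i ≤ B :=
    fun i hi => le_trans (le_abs_self _)
      (Finset.single_le_sum (fun j _ => abs_nonneg (r j)) (Finset.mem_range.mpr hi))
  set K : ℕ := max M₀ (max 3 (⌈B/d⌉₊ + 1)) with hKdef
  have hK3 : 3 ≤ K := le_trans (le_max_left 3 _) (le_max_right M₀ _)
  have hKr : ∀ n : ℕ, K ≤ n → B ≤ r n := by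
    intro n hn
    have hm3 : max 3 (⌈B/d⌉₊ + 1) ≤ n := le_trans (le_max_right _ _) hn
    have h3 : 3 ≤ n := le_trans (le_max_left _ _) hm3
    have hceil : ⌈B/d⌉₊ + 1 ≤ n := le_trans (le_max_right _ _) hm3
    have h1 : B/d ≤ (n:ℝ) := le_trans (Nat.le_ceil _)
      (by exact_mod_cast Nat.le_of_succ_le hceil)
    have h2 : B ≤ d * n := by
      rw [div_le_iff₀ hdpos] at h1
      linarith [mul_comm (n:ℝ) d]
    exact le_trans h2 (hlin n h3)
  have hK : ∀ i j : ℕ, i ≤ j → K ≤ j → r i ≤ r j := by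
    intro i j hij hKj
    rcases lt_or_ge i M₀ with h | h
    · exact le_trans (hB i h) (hKr j hKj)
    · exact hmono' i j h hij
  set C : ℝ := 4 * f 1 / d + 4 * f 2 / d ^ 2 with hCdef
  have key : ∀ᶠ N in atTop, 2 ≤ Z N / f N ∧ Z N / f N ≤ 2 + C * (1 / (N:ℝ)) := by
    filter_upwards [eventually_ge_atTop (2*K + 11)] with N hN
    have hN11 : 11 ≤ N := by omega
    have hsym : ∀ i, i ≤ N → f i * f (N - i) = f (N - i) * f (N - (N - i)) := by
      intro i hi
      rw [Nat.sub_sub_self hi]; ring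
    have hdec : ∀ i, 2*i + 1 ≤ N → f (i+1) * f (N - (i+1)) ≤ f i * f (N - i) := by
      intro i hi
      have hsub : N - i = (N - (i+1)) + 1 := by omega
      have e1 : f (N - i) = f (N - (i+1)) * r (N - (i+1)) := by rw [hsub, hstep]
      have hrle : r i ≤ r (N - (i+1)) := hK i (N - (i+1)) (by omega) (by omega)
      rw [e1, hstep i]
      nlinarith [mul_nonneg (mul_pos (hfpos i) (hfpos (N - (i+1)))).le
        (sub_nonneg.mpr hrle)]
    have hmid : ∀ i, 2 ≤ i → 2*i ≤ N → f i * f (N - i) ≤ f 2 * f (N - 2) := by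
      intro i hi
      induction i, hi using Nat.le_induction with
      | base => intro _; exact le_rfl
      | succ n hn ih => intro h; exact le_trans (hdec n (by omega)) (ih (by omega))
    have hbound : ∀ i, 2 ≤ i → i + 2 ≤ N → f i * f (N - i) ≤ f 2 * f (N - 2) := by
      intro i hi h2
      rcases le_or_gt (2*i) N with h | h
      · exact hmid i hi h
      · rw [hsym i (by omega)]
        exact hmid (N - i) (by omega) (by omega)
    have hZd : Z N = 2 * f N + (2 * (f 1 * f (N-1)) + ∑ i ∈ Finset.Ico 2 (N-1), f i * f (N - i)) := by
      rw [hZ N, Finset.sum_range_succ, Finset.range_eq_Ico,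
          Finset.sum_eq_sum_Ico_succ_bot (by omega : 0 < N),
          Finset.sum_eq_sum_Ico_succ_bot (by omega : 1 < N)]
      have htop := Finset.sum_Ico_succ_top (by omega : 2 ≤ N - 1) (fun i => f i * f (N - i))
      rw [show N - 1 + 1 = N from by omega] at htop
      rw [htop, Nat.sub_zero, Nat.sub_self, hf0, show N - (N-1) = 1 from by omega]
      ring
    have hmidsum : ∑ i ∈ Finset.Ico 2 (N-1), f i * f (N - i) ≤ (N:ℝ) * (f 2 * f (N - 2)) := by
      have h1 : ∑ i ∈ Finset.Ico 2 (N-1), f i * f (N - i)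
          ≤ (Finset.Ico 2 (N-1)).card • (f 2 * f (N - 2)) :=
        Finset.sum_le_card_nsmul _ _ _ (fun i hi => by
          rw [Finset.mem_Ico] at hi
          exact hbound i hi.1 (by omega))
      rw [Nat.card_Ico, nsmul_eq_mul] at h1
      refine le_trans h1 (mul_le_mul_of_nonneg_right ?_
        (mul_pos (hfpos 2) (hfpos (N-2))).le)
      exact_mod_cast Nat.cast_le.mpr (by omega : N - 1 - 2 ≤ N)
    have hsumnn : 0 ≤ ∑ i ∈ Finset.Ico 2 (N-1), f i * f (N - i) :=
      Finset.sum_nonneg fun i _ => (mul_pos (hfpos _) (hfpos _)).le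
    constructor
    · rw [le_div_iff₀ (hfpos N)]
      have h1 := (mul_pos (hfpos 1) (hfpos (N-1))).le
      linarith
    · rw [div_le_iff₀ (hfpos N)]
      have hnR : (0:ℝ) < N := by exact_mod_cast (by omega : 0 < N)
      have hnR2 : (2:ℝ) ≤ N := by exact_mod_cast (by omega : 2 ≤ N)
      have hnR4 : (4:ℝ) ≤ N := by exact_mod_cast (by omega : 4 ≤ N)
      have hcast1 : ((N-1:ℕ):ℝ) = (N:ℝ) - 1 := by
        rw [Nat.cast_sub (by omega : 1 ≤ N)]; norm_num
      have hcast2 : ((N-2:ℕ):ℝ) = (N:ℝ) - 2 := by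
        rw [Nat.cast_sub (by omega : 2 ≤ N)]; norm_num
      have hr1 : d * ((N:ℝ)/2) ≤ r (N-1) := by
        have h := hlin (N-1) (by omega)
        rw [hcast1] at h
        nlinarith
      have hr2 : d * ((N:ℝ)/2) ≤ r (N-2) := by
        have h := hlin (N-2) (by omega)
        rw [hcast2] at h
        nlinarith
      have hFa : f (N-1) * (d * ((N:ℝ)/2)) ≤ f N := by
        have e : f N = f (N-1) * r (N-1) := by
          rw [← hstep]; congr 1; omega
        rw [e]; exact mul_le_mul_of_nonneg_left hr1 (hfpos _).le
      have hab : f (N-2) * (d * ((N:ℝ)/2)) ≤ f (N-1) := by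
        have e : f (N-1) = f (N-2) * r (N-2) := by
          rw [← hstep]; congr 1; omega
        rw [e]; exact mul_le_mul_of_nonneg_left hr2 (hfpos _).le
      have hCF : C * (1/(N:ℝ)) * f N
          = (4 * f 1 * d * f N + 4 * f 2 * f N) / (d^2 * (N:ℝ)) := by
        rw [hCdef]; field_simp
      have key2 : 2 * (f 1 * f (N-1)) + (N:ℝ) * (f 2 * f (N-2))
          ≤ (4 * f 1 * d * f N + 4 * f 2 * f N) / (d^2 * (N:ℝ)) := by
        rw [le_div_iff₀ (by positivity)]
        have hf1 := (hfpos 1).le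
        have hf2 := (hfpos 2).le
        have h1 : 0 ≤ (f N - f (N-1) * (d * ((N:ℝ)/2))) * (4 * f 1 * d) :=
          mul_nonneg (sub_nonneg.2 hFa)
            (mul_nonneg (mul_nonneg (by norm_num) hf1) hdpos.le)
        have h2 : 0 ≤ (f (N-1) - f (N-2) * (d * ((N:ℝ)/2))) * (4 * f 2 * (d * ((N:ℝ)/2))) :=
          mul_nonneg (sub_nonneg.2 hab)
            (mul_nonneg (mul_nonneg (by norm_num) hf2)
              (mul_nonneg hdpos.le (by positivity)))
        have h3 : 0 ≤ (f N - f (N-1) * (d * ((N:ℝ)/2))) * (4 * f 2) :=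
          mul_nonneg (sub_nonneg.2 hFa) (mul_nonneg (by norm_num) hf2)
        linarith [h1, h2, h3]
      have hexp : (2 + C * (1/(N:ℝ))) * f N = 2 * f N + C * (1/(N:ℝ)) * f N := by ring
      rw [hexp, hCF]
      linarith
  have h1 : Tendsto (fun N => Z N / f N) atTop (nhds 2) := by
    have hub : Tendsto (fun N : ℕ => 2 + C * (1/(N:ℝ))) atTop (nhds 2) := by
      have h0 : Tendsto (fun N : ℕ => (1:ℝ)/N) atTop (nhds 0) :=
        tendsto_one_div_atTop_nhds_zero_nat
      have hx : Tendsto (fun N : ℕ => 2 + C * (1/(N:ℝ))) atTop (nhds (2 + C * 0)) :=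
        Tendsto.const_add 2 (h0.const_mul C)
      simpa using hx
    exact tendsto_of_tendsto_of_tendsto_of_le_of_le' tendsto_const_nhds hub
      (key.mono fun N h => h.1) (key.mono fun N h => h.2)
  have hZpos : ∀ N, 0 < Z N := fun N => by
    rw [hZ N]
    exact Finset.sum_pos (fun i _ => mul_pos (hfpos _) (hfpos _)) Finset.nonempty_range_add_one
  have h2 := h1.inv₀ (by norm_num : (2:ℝ) ≠ 0)
  refine ⟨h1, ?_, ?_⟩
  · convert h2 using 2 with N
    · rw [hf0, mul_one, inv_div]
    · norm_num
  · convert h2 using 2 with N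
    · rw [hf0, one_mul, inv_div]
    · norm_num
end
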